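/- arXiv:2209.08050 — 6 statements merged into one kernel-verified Lean document; each statement's English description precedes it below -/
import Mathlib

section
/- Let n ≥ 2 and 1 ≤ i < j ≤ n. Then Cov[ln(U_(i)), ln(U_(j))] = ψ₁(j) − ψ₁(n+1) and Cov[ln(1−U_(i)), ln(1−U_(j))] = ψ₁(n+1−i) − ψ₁(n+1); here E[ln(U_(i)) ln(U_(j))] is the integral of (ln u)(ln v) against the joint density c_{i,j,n} u^{i−1}(v−u)^{j−i−1}(1−v)^{n−j} over the region 0 < u < v < 1, and Cov[X,Y] = E[XY] − E[X]E[Y]. -/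
/-!
Substituting `u = v w` in the inner integral reduces the joint moment to the one-dimensional
integrals `∫₀¹ logᵏ t · tᵖ (1 - t)^q dt`, `k = 0, 1, 2`. These equal `B(p+1, q+1)` times `1`,
`ψ(p+1) - ψ(p+q+2)` and `(ψ(p+1) - ψ(p+q+2))² + ψ₁(p+1) - ψ₁(p+q+2)`: the identity
`(1 - t)^(q+1) = (1 - t)^q - t (1 - t)^q` reduces them to `q = 0`, and is matched by the
recurrences `ψ(x+1) = ψ(x) + 1/x`, `ψ₁(x+1) = ψ₁(x) - 1/x²`. The normalising constant cancels
the two Beta factors and the product of the means cancels the cross term, leaving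
`ψ₁(j) - ψ₁(n+1)`. For `1 - U`, Fubini and the reflection `(u, v) ↦ (1 - v, 1 - u)` of the
triangle `0 < u < v < 1` turn the second integral into the first with the exponents of `u` and
`1 - v` exchanged, i.e. with `(i, j)` replaced by `(n + 1 - j, n + 1 - i)`.
-/

open MeasureTheory intervalIntegral

/-- The digamma function `ψ`, the derivative of `log Γ` on `(0, ∞)`. -/
noncomputable def digamma (x : ℝ) : ℝ := deriv (fun y => Real.log (Real.Gamma y)) x

/-- The trigamma function `ψ₁`, the derivative of the digamma function. -/
noncomputable def trigamma (x : ℝ) : ℝ := deriv digamma x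

open Real Set Filter Topology

lemma analyticAt_log_Gamma {x : ℝ} (hx : 0 < x) : AnalyticAt ℝ (fun y => log (Gamma y)) x := by
  have hΓ : AnalyticAt ℂ Complex.Gamma x := by
    refine DifferentiableOn.analyticAt (s := {z | 0 < z.re}) (fun z hz => ?_) ?_
    · refine (Complex.differentiableAt_Gamma z fun m hm => ?_).differentiableWithinAt
      have : (0 : ℝ) < -m := by simpa [hm] using hz
      linarith [(m.cast_nonneg : (0 : ℝ) ≤ m)]
    · exact (isOpen_lt continuous_const Complex.continuous_re).mem_nhds (by simpa using hx)
  have hre : (fun y : ℝ => (Complex.Gamma y).re) = Gamma := by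
    funext y; rw [Complex.Gamma_ofReal, Complex.ofReal_re]
  exact (hre ▸ hΓ.re_ofReal).log (Gamma_pos_of_pos hx)

lemma digamma_add_one {x : ℝ} (hx : 0 < x) : digamma (x + 1) = digamma x + x⁻¹ := by
  have hlogΓ : (fun y => log (Gamma (y + 1))) =ᶠ[𝓝 x] fun y => log (Gamma y) + log y := by
    filter_upwards [eventually_gt_nhds hx] with y hy
    rw [Gamma_add_one hy.ne', log_mul hy.ne' (Gamma_pos_of_pos hy).ne', add_comm]
  rw [digamma, ← deriv_comp_add_const, hlogΓ.deriv_eq,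
    deriv_fun_add (analyticAt_log_Gamma hx).differentiableAt (differentiableAt_log hx.ne'),
    deriv_log, digamma]

lemma trigamma_add_one {x : ℝ} (hx : 0 < x) : trigamma (x + 1) = trigamma x - (x ^ 2)⁻¹ := by
  have hψ : (fun y => digamma (y + 1)) =ᶠ[𝓝 x] fun y => digamma y + y⁻¹ := by
    filter_upwards [eventually_gt_nhds hx] with y hy using digamma_add_one hy
  have hψx : DifferentiableAt ℝ digamma x := by
    obtain ⟨s, hs, hf⟩ := (analyticAt_log_Gamma hx).exists_mem_nhds_analyticOnNhd
    exact (hf.deriv x (mem_of_mem_nhds hs)).differentiableAt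
  rw [trigamma, ← deriv_comp_add_const, hψ.deriv_eq,
    deriv_fun_add hψx (differentiableAt_inv hx.ne'), deriv_inv, trigamma, sub_eq_add_neg]

section Triangle

variable {E : Type*} [NormedAddCommGroup E] [NormedSpace ℝ E]

theorem integral_triangle_swap {a b : ℝ} (hab : a ≤ b) {f : ℝ → ℝ → E}
    (hf : IntegrableOn (Function.uncurry f) (Ioc a b ×ˢ Ioc a b)) :
    ∫ v in a..b, ∫ u in a..v, f u v = ∫ u in a..b, ∫ v in u..b, f u v := by
  set μ := volume.restrict (Ioc a b)
  set G := {z : ℝ × ℝ | z.1 ≤ z.2}.indicator (Function.uncurry f)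
  have hG : Integrable G (μ.prod μ) := by
    rw [Measure.prod_restrict, ← Measure.volume_eq_prod]
    exact hf.integrable.indicator (measurableSet_le measurable_fst measurable_snd)
  have hleft : ∀ v ∈ Ioc a b, ∫ u, G (u, v) ∂μ = ∫ u in a..v, f u v := fun v hv => by
    have hs : Ioc a b ∩ Iic v = Ioc a v := by rw [Ioc_inter_Iic, inf_eq_right.mpr hv.2]
    rw [integral_of_le hv.1.le, ← hs, ← setIntegral_indicator measurableSet_Iic]
    rfl
  have hright : ∀ u ∈ Ioc a b, ∫ v, G (u, v) ∂μ = ∫ v in u..b, f u v := fun u hu => by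
    have hs : Ioc a b ∩ Ici u = Icc u b := by
      ext v
      simp only [mem_inter_iff, mem_Ioc, mem_Ici, mem_Icc]
      constructor
      · exact fun h => ⟨h.2, h.1.2⟩
      · exact fun h => ⟨⟨hu.1.trans_le h.1, h.2⟩, h.1⟩
    rw [integral_of_le hu.2, ← integral_Icc_eq_integral_Ioc (x := u), ← hs,
      ← setIntegral_indicator measurableSet_Ici]
    rfl
  rw [integral_of_le hab, integral_of_le hab, ← setIntegral_congr_fun measurableSet_Ioc hleft,
    ← setIntegral_congr_fun measurableSet_Ioc hright]
  exact (integral_integral_swap (f := fun u v => G (u, v)) hG).symm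

theorem integral_triangle_comp_one_sub {f : ℝ → ℝ → E}
    (hf : IntegrableOn (Function.uncurry f) (Ioc 0 1 ×ˢ Ioc 0 1)) :
    ∫ v in (0 : ℝ)..1, ∫ u in (0 : ℝ)..v, f u v =
      ∫ v in (0 : ℝ)..1, ∫ u in (0 : ℝ)..v, f (1 - v) (1 - u) := by
  have hinner : ∀ v : ℝ, ∫ u in (0 : ℝ)..v, f (1 - v) (1 - u) = ∫ u in (1 - v)..1, f (1 - v) u :=
    fun v => by simp [integral_comp_sub_left (f (1 - v))]
  simp only [hinner, integral_triangle_swap zero_le_one hf]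
  simpa using (integral_comp_sub_left (fun w => ∫ u in w..1, f w u) (a := 0) (b := 1) 1).symm

end Triangle

lemma tendsto_pow_mul_log_pow_nhdsGT_zero (m k : ℕ) :
    Tendsto (fun t : ℝ => t ^ (m + 1) * log t ^ k) (𝓝[>] 0) (𝓝 0) := by
  rcases k.eq_zero_or_pos with rfl | hk
  · simpa using ((continuous_pow (m + 1)).tendsto' 0 0 (by simp)).mono_left nhdsWithin_le_nhds
  have hr : (0 : ℝ) < (m + 1) / k := by positivity
  have h := (tendsto_log_mul_rpow_nhdsGT_zero hr).pow k
  rw [zero_pow hk.ne'] at h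
  refine h.congr' ?_
  filter_upwards [self_mem_nhdsWithin] with t (ht : 0 < t)
  rw [mul_pow, ← rpow_natCast (t ^ _), ← rpow_mul ht.le, div_mul_cancel₀ _ (by positivity),
    mul_comm]
  norm_cast

lemma continuousOn_pow_mul_log_pow (m k : ℕ) :
    ContinuousOn (fun t : ℝ => t ^ (m + 1) * log t ^ k) (Ici 0) := by
  intro t ht
  rcases (mem_Ici.mp ht).eq_or_lt with rfl | ht
  · rw [← continuousWithinAt_Ioi_iff_Ici, ContinuousWithinAt]
    simpa using tendsto_pow_mul_log_pow_nhdsGT_zero m k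
  · exact ((continuousAt_pow _ _).mul ((continuousAt_log ht.ne').pow k)).continuousWithinAt

lemma exists_primitive_log_mul_pow (m : ℕ) :
    ∃ F : ℝ → ℝ, ContinuousOn F (Icc 0 1) ∧
      (∀ t ∈ Ioo (0 : ℝ) 1, HasDerivAt F (log t * t ^ m) t) ∧
      F 1 - F 0 = -(((m : ℝ) + 1) ^ 2)⁻¹ := by
  refine ⟨fun t => t ^ (m + 1) * log t ^ 1 / (m + 1) - t ^ (m + 1) / (m + 1) ^ 2,
    ?_, fun t ht => ?_, by simp⟩
  · exact (((continuousOn_pow_mul_log_pow m 1).div_const _).sub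
      ((continuousOn_pow _).div_const _)).mono Icc_subset_Ici_self
  · have hpow : HasDerivAt (fun t : ℝ => t ^ (m + 1)) ((m + 1) * t ^ m) t := by
      simpa using hasDerivAt_pow (m + 1) t
    have ht0 : t ≠ 0 := ht.1.ne'
    refine (((hpow.fun_mul ((hasDerivAt_log ht0).fun_pow 1)).div_const _).sub
      (hpow.div_const _)).congr_deriv ?_
    field_simp
    ring

lemma exists_primitive_log_sq_mul_pow (m : ℕ) :
    ∃ F : ℝ → ℝ, ContinuousOn F (Icc 0 1) ∧
      (∀ t ∈ Ioo (0 : ℝ) 1, HasDerivAt F (log t ^ 2 * t ^ m) t) ∧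
      F 1 - F 0 = 2 / ((m : ℝ) + 1) ^ 3 := by
  refine ⟨fun t => t ^ (m + 1) * log t ^ 2 / (m + 1) - 2 * (t ^ (m + 1) * log t ^ 1) / (m + 1) ^ 2
      + 2 * t ^ (m + 1) / (m + 1) ^ 3, ?_, fun t ht => ?_, by simp⟩
  · exact ((((continuousOn_pow_mul_log_pow m 2).div_const _).sub
      (((continuousOn_pow_mul_log_pow m 1).const_smul (2 : ℝ)).div_const _)).add
      (((continuousOn_pow _).const_smul (2 : ℝ)).div_const _)).mono Icc_subset_Ici_self
  · have hpow : HasDerivAt (fun t : ℝ => t ^ (m + 1)) ((m + 1) * t ^ m) t := by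
      simpa using hasDerivAt_pow (m + 1) t
    have ht0 : t ≠ 0 := ht.1.ne'
    have hlog := hasDerivAt_log ht0
    refine ((((hpow.fun_mul (hlog.fun_pow 2)).div_const _).sub
      (((hpow.fun_mul (hlog.fun_pow 1)).const_mul 2).div_const _)).add
      ((hpow.const_mul 2).div_const _)).congr_deriv ?_
    field_simp
    ring

lemma integral_log_mul_pow (m : ℕ) :
    ∫ t in (0 : ℝ)..1, log t * t ^ m = -(((m : ℝ) + 1) ^ 2)⁻¹ := by
  obtain ⟨F, hcont, hderiv, hF⟩ := exists_primitive_log_mul_pow m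
  rw [integral_eq_sub_of_hasDerivAt_of_le zero_le_one hcont hderiv
    (intervalIntegrable_log'.mul_continuousOn (continuousOn_pow m)), hF]

lemma intervalIntegrable_log_sq : IntervalIntegrable (fun t => log t ^ 2) volume 0 1 := by
  obtain ⟨F, hcont, hderiv, -⟩ := exists_primitive_log_sq_mul_pow 0
  simp only [pow_zero, mul_one] at hderiv
  rw [intervalIntegrable_iff_integrableOn_Ioc_of_le zero_le_one]
  exact integrableOn_deriv_of_nonneg hcont hderiv fun t _ => sq_nonneg _

lemma integral_log_sq_mul_pow (m : ℕ) :
    ∫ t in (0 : ℝ)..1, log t ^ 2 * t ^ m = 2 / ((m : ℝ) + 1) ^ 3 := by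
  obtain ⟨F, hcont, hderiv, hF⟩ := exists_primitive_log_sq_mul_pow m
  rw [integral_eq_sub_of_hasDerivAt_of_le zero_le_one hcont hderiv
    (intervalIntegrable_log_sq.mul_continuousOn (continuousOn_pow m)), hF]

open Nat in
/-- `betaNat p q = B(p + 1, q + 1) = ∫₀¹ tᵖ (1 - t)^q dt`. -/
noncomputable def betaNat (p q : ℕ) : ℝ := p ! * q ! / (p + q + 1)!

lemma betaNat_zero_right (p : ℕ) : betaNat p 0 = ((p : ℝ) + 1)⁻¹ := by
  rw [betaNat, add_zero, Nat.factorial_succ, Nat.factorial_zero]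
  push_cast
  field_simp

lemma betaNat_succ_right (p q : ℕ) :
    betaNat p (q + 1) = betaNat p q * (q + 1) / (p + q + 2) := by
  rw [betaNat, betaNat, show p + (q + 1) + 1 = p + q + 1 + 1 by ring, Nat.factorial_succ,
    Nat.factorial_succ]
  push_cast
  field_simp
  ring

lemma betaNat_succ_left (p q : ℕ) :
    betaNat (p + 1) q = betaNat p q * (p + 1) / (p + q + 2) := by
  rw [betaNat, betaNat, show p + 1 + q + 1 = p + q + 1 + 1 by ring, Nat.factorial_succ,
    Nat.factorial_succ]
  push_cast
  field_simp
  ring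

open Nat in
lemma factorial_div_mul_betaNat_mul_betaNat (p b c : ℕ) :
    ((p + b + c + 2)! : ℝ) / (p ! * b ! * c !) * (betaNat p b * betaNat (p + b + 1) c) = 1 := by
  rw [betaNat, betaNat, show p + b + 1 + c + 1 = p + b + c + 2 by ring]
  field_simp

lemma integral_mul_pow_mul_one_sub_pow_succ {f : ℝ → ℝ} (hf : IntervalIntegrable f volume 0 1)
    (p q : ℕ) :
    ∫ t in (0 : ℝ)..1, f t * (t ^ p * (1 - t) ^ (q + 1)) =
      (∫ t in (0 : ℝ)..1, f t * (t ^ p * (1 - t) ^ q)) -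
        ∫ t in (0 : ℝ)..1, f t * (t ^ (p + 1) * (1 - t) ^ q) := by
  rw [← integral_sub (hf.mul_continuousOn (by fun_prop)) (hf.mul_continuousOn (by fun_prop))]
  congr 1 with t
  ring

lemma integral_pow_mul_one_sub_pow (p q : ℕ) :
    ∫ t in (0 : ℝ)..1, t ^ p * (1 - t) ^ q = betaNat p q := by
  induction q generalizing p with
  | zero => simp [betaNat_zero_right]
  | succ q ih =>
    have h := integral_mul_pow_mul_one_sub_pow_succ (f := fun _ => 1) intervalIntegrable_const p q
    simp only [one_mul] at h
    rw [h, ih, ih, betaNat_succ_right, betaNat_succ_left]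
    field_simp
    ring

lemma integral_log_mul_pow_mul_one_sub_pow (p q : ℕ) :
    ∫ t in (0 : ℝ)..1, log t * (t ^ p * (1 - t) ^ q) =
      betaNat p q * (digamma ((p : ℝ) + 1) - digamma ((p : ℝ) + q + 2)) := by
  induction q generalizing p with
  | zero =>
    have hp : (0 : ℝ) < p + 1 := by positivity
    simp only [pow_zero, mul_one, integral_log_mul_pow, betaNat_zero_right, Nat.cast_zero,
      add_zero, show (p : ℝ) + 2 = p + 1 + 1 by ring, digamma_add_one hp]
    field_simp
    ring
  | succ q ih =>
    have hp : (0 : ℝ) < p + 1 := by positivity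
    have hpq : (0 : ℝ) < p + q + 2 := by positivity
    rw [integral_mul_pow_mul_one_sub_pow_succ intervalIntegrable_log', ih, ih,
      betaNat_succ_right, betaNat_succ_left]
    push_cast
    rw [digamma_add_one hp, show (p : ℝ) + 1 + q + 2 = p + q + 2 + 1 by ring,
      show (p : ℝ) + (q + 1) + 2 = p + q + 2 + 1 by ring, digamma_add_one hpq]
    field_simp
    ring

lemma integral_log_sq_mul_pow_mul_one_sub_pow (p q : ℕ) :
    ∫ t in (0 : ℝ)..1, log t ^ 2 * (t ^ p * (1 - t) ^ q) =
      betaNat p q * ((digamma ((p : ℝ) + 1) - digamma ((p : ℝ) + q + 2)) ^ 2 +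
        (trigamma ((p : ℝ) + 1) - trigamma ((p : ℝ) + q + 2))) := by
  induction q generalizing p with
  | zero =>
    have hp : (0 : ℝ) < p + 1 := by positivity
    simp only [pow_zero, mul_one, integral_log_sq_mul_pow, betaNat_zero_right, Nat.cast_zero,
      add_zero, show (p : ℝ) + 2 = p + 1 + 1 by ring, digamma_add_one hp, trigamma_add_one hp]
    field_simp
    ring
  | succ q ih =>
    have hp : (0 : ℝ) < p + 1 := by positivity
    have hpq : (0 : ℝ) < p + q + 2 := by positivity
    rw [integral_mul_pow_mul_one_sub_pow_succ intervalIntegrable_log_sq, ih, ih,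
      betaNat_succ_right, betaNat_succ_left]
    push_cast
    rw [digamma_add_one hp, trigamma_add_one hp, show (p : ℝ) + 1 + q + 2 = p + q + 2 + 1 by ring,
      show (p : ℝ) + (q + 1) + 2 = p + q + 2 + 1 by ring, digamma_add_one hpq,
      trigamma_add_one hpq]
    field_simp
    ring

lemma integral_log_mul_pow_mul_sub_pow (p b : ℕ) {v : ℝ} (hv : 0 < v) :
    ∫ u in (0 : ℝ)..v, log u * (u ^ p * (v - u) ^ b) =
      v ^ (p + b + 1) * betaNat p b *
        (log v + digamma ((p : ℝ) + 1) - digamma ((p : ℝ) + b + 2)) := by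
  have hscale := smul_integral_comp_mul_left (fun u => log u * (u ^ p * (v - u) ^ b)) v
    (a := 0) (b := 1)
  rw [mul_zero, mul_one] at hscale
  have hsplit : ∫ w in (0 : ℝ)..1, log (v * w) * ((v * w) ^ p * (v - v * w) ^ b) =
      ∫ w in (0 : ℝ)..1, v ^ (p + b) * log v * (w ^ p * (1 - w) ^ b) +
        v ^ (p + b) * (log w * (w ^ p * (1 - w) ^ b)) := by
    refine integral_congr_ae (Eventually.of_forall fun w hw => ?_)
    rw [uIoc_of_le zero_le_one] at hw
    rw [log_mul hv.ne' hw.1.ne', show v - v * w = v * (1 - w) by ring, mul_pow, mul_pow, pow_add]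
    ring
  rw [← hscale, smul_eq_mul, hsplit,
    integral_add (Continuous.intervalIntegrable (by fun_prop) _ _)
      ((intervalIntegrable_log'.mul_continuousOn (by fun_prop)).const_mul _),
    intervalIntegral.integral_const_mul, intervalIntegral.integral_const_mul,
    integral_pow_mul_one_sub_pow, integral_log_mul_pow_mul_one_sub_pow]
  ring

lemma integral_triangle_log_mul_log (p b c : ℕ) :
    ∫ v in (0 : ℝ)..1, ∫ u in (0 : ℝ)..v, log u * log v * (u ^ p * (v - u) ^ b * (1 - v) ^ c) =
      betaNat p b * betaNat (p + b + 1) c *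
        ((digamma ((p : ℝ) + b + 2) - digamma ((p : ℝ) + b + c + 3)) ^ 2 +
          (trigamma ((p : ℝ) + b + 2) - trigamma ((p : ℝ) + b + c + 3)) +
          (digamma ((p : ℝ) + 1) - digamma ((p : ℝ) + b + 2)) *
            (digamma ((p : ℝ) + b + 2) - digamma ((p : ℝ) + b + c + 3))) := by
  set D := digamma ((p : ℝ) + 1) - digamma ((p : ℝ) + b + 2)
  have hinner : ∀ v ∈ uIoc (0 : ℝ) 1,
      ∫ u in (0 : ℝ)..v, log u * log v * (u ^ p * (v - u) ^ b * (1 - v) ^ c) =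
        betaNat p b * (log v ^ 2 * (v ^ (p + b + 1) * (1 - v) ^ c)) +
          betaNat p b * D * (log v * (v ^ (p + b + 1) * (1 - v) ^ c)) := fun v hv => by
    rw [uIoc_of_le zero_le_one] at hv
    simp_rw [show ∀ u, log u * log v * (u ^ p * (v - u) ^ b * (1 - v) ^ c) =
      log v * (1 - v) ^ c * (log u * (u ^ p * (v - u) ^ b)) from fun u => by ring]
    rw [intervalIntegral.integral_const_mul, integral_log_mul_pow_mul_sub_pow p b hv.1]
    ring
  rw [integral_congr_ae (Eventually.of_forall hinner), integral_add
      ((intervalIntegrable_log_sq.mul_continuousOn (by fun_prop)).const_mul _)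
      ((intervalIntegrable_log'.mul_continuousOn (by fun_prop)).const_mul _),
    intervalIntegral.integral_const_mul, intervalIntegral.integral_const_mul,
    integral_log_sq_mul_pow_mul_one_sub_pow, integral_log_mul_pow_mul_one_sub_pow]
  push_cast
  rw [show (p : ℝ) + b + 1 + 1 = p + b + 2 by ring,
    show (p : ℝ) + b + 1 + c + 2 = p + b + c + 3 by ring]
  ring

lemma integrableOn_log_one_sub_mul_log_one_sub (p b c : ℕ) :
    IntegrableOn (Function.uncurry fun u v : ℝ => log (1 - u) * log (1 - v) *
      (u ^ p * (v - u) ^ b * (1 - v) ^ c)) (Ioc 0 1 ×ˢ Ioc 0 1) := by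
  have hlog : IntegrableOn (fun u : ℝ => log (1 - u)) (Ioc 0 1) := by
    rw [← intervalIntegrable_iff_integrableOn_Ioc_of_le zero_le_one]
    simpa using (intervalIntegrable_log' (a := 0) (b := 1)).comp_sub_left 1 |>.symm
  have hprod := hlog.integrable.mul_prod hlog.integrable
  rw [Measure.prod_restrict, ← Measure.volume_eq_prod] at hprod
  refine hprod.mul_bdd (c := 1) (by fun_prop)
    ((ae_restrict_iff' (measurableSet_Ioc.prod measurableSet_Ioc)).mpr
      (Eventually.of_forall fun z ⟨⟨hu0, hu1⟩, ⟨hv0, hv1⟩⟩ => ?_))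
  have h1 : ‖z.1‖ ≤ 1 := by rw [norm_eq_abs, abs_le]; constructor <;> linarith
  have h2 : ‖z.2 - z.1‖ ≤ 1 := by rw [norm_eq_abs, abs_le]; constructor <;> linarith
  have h3 : ‖1 - z.2‖ ≤ 1 := by rw [norm_eq_abs, abs_le]; constructor <;> linarith
  simp only [norm_mul, norm_pow]
  exact mul_le_one₀ (mul_le_one₀ (pow_le_one₀ (norm_nonneg _) h1) (by positivity)
    (pow_le_one₀ (norm_nonneg _) h2)) (by positivity) (pow_le_one₀ (norm_nonneg _) h3)

lemma integral_triangle_log_one_sub_mul_log_one_sub (p b c : ℕ) :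
    ∫ v in (0 : ℝ)..1, ∫ u in (0 : ℝ)..v,
        log (1 - u) * log (1 - v) * (u ^ p * (v - u) ^ b * (1 - v) ^ c) =
      ∫ v in (0 : ℝ)..1, ∫ u in (0 : ℝ)..v,
        log u * log v * (u ^ c * (v - u) ^ b * (1 - v) ^ p) := by
  rw [integral_triangle_comp_one_sub (integrableOn_log_one_sub_mul_log_one_sub p b c)]
  congr 1 with v
  congr 1 with u
  rw [sub_sub_cancel, sub_sub_cancel, sub_sub_sub_cancel_left]
  ring

theorem covariance_log_orderStats_general
    (n i j : ℕ) (hi1 : 1 ≤ i) (hij : i < j) (hjn : j ≤ n) :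
    ((n.factorial : ℝ) /
        ((i - 1).factorial * (j - i - 1).factorial * (n - j).factorial)) *
        (∫ v in (0:ℝ)..1, ∫ u in (0:ℝ)..v,
          Real.log u * Real.log v *
            (u ^ (i - 1) * (v - u) ^ (j - i - 1) * (1 - v) ^ (n - j)))
      - (digamma i - digamma ((n : ℝ) + 1)) * (digamma j - digamma ((n : ℝ) + 1))
      = trigamma j - trigamma ((n : ℝ) + 1) ∧
    ((n.factorial : ℝ) /
        ((i - 1).factorial * (j - i - 1).factorial * (n - j).factorial)) *
        (∫ v in (0:ℝ)..1, ∫ u in (0:ℝ)..v,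
          Real.log (1 - u) * Real.log (1 - v) *
            (u ^ (i - 1) * (v - u) ^ (j - i - 1) * (1 - v) ^ (n - j)))
      - (digamma ((n : ℝ) + 1 - i) - digamma ((n : ℝ) + 1)) *
          (digamma ((n : ℝ) + 1 - j) - digamma ((n : ℝ) + 1))
      = trigamma ((n : ℝ) + 1 - i) - trigamma ((n : ℝ) + 1) := by
  obtain ⟨p, rfl⟩ : ∃ p, i = p + 1 := ⟨i - 1, by omega⟩
  obtain ⟨b, rfl⟩ : ∃ b, j = p + b + 2 := ⟨j - p - 2, by omega⟩
  obtain ⟨c, rfl⟩ : ∃ c, n = p + b + c + 2 := ⟨n - p - b - 2, by omega⟩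
  rw [show p + 1 - 1 = p by omega, show p + b + 2 - (p + 1) - 1 = b by omega,
    show p + b + c + 2 - (p + b + 2) = c by omega, integral_triangle_log_one_sub_mul_log_one_sub,
    integral_triangle_log_mul_log, integral_triangle_log_mul_log]
  have hK := factorial_div_mul_betaNat_mul_betaNat p b c
  have hK' := factorial_div_mul_betaNat_mul_betaNat c b p
  rw [show c + b + p + 2 = p + b + c + 2 by ring,
    show (c.factorial * b.factorial * p.factorial : ℝ) =
      p.factorial * b.factorial * c.factorial by ring] at hK'
  push_cast
  rw [← mul_assoc _ (betaNat p b * _), hK, ← mul_assoc _ (betaNat c b * _), hK',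
    show (p : ℝ) + b + c + 2 + 1 - (p + 1) = c + b + 2 by ring,
    show (p : ℝ) + b + c + 2 + 1 - (p + b + 2) = c + 1 by ring,
    show (p : ℝ) + b + c + 2 + 1 = p + b + c + 3 by ring,
    show (c : ℝ) + b + p + 3 = p + b + c + 3 by ring]
  constructor <;> ring

/-- For `1 ≤ i < j ≤ n`, with `(U_(i), U_(j))` the order statistics of
`n` i.i.d. uniforms on `[0,1]` (with joint density
`c_{i,j,n} u^{i−1}(v−u)^{j−i−1}(1−v)^{n−j}` on `{0 < u < v < 1}`,
`c_{i,j,n} = n!/((i−1)!(j−i−1)!(n−j)!)`):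
`Cov[ln U_(i), ln U_(j)] = ψ₁(j) − ψ₁(n+1)` and
`Cov[ln(1−U_(i)), ln(1−U_(j))] = ψ₁(n+1−i) − ψ₁(n+1)`, where
`Cov[X,Y] = E[XY] − E[X]E[Y]` and the means are the known digamma expressions. -/
theorem covariance_log_orderStats
    (n i j : ℕ) (hn : 2 ≤ n) (hi1 : 1 ≤ i) (hij : i < j) (hjn : j ≤ n) :
    ((n.factorial : ℝ) /
        ((i - 1).factorial * (j - i - 1).factorial * (n - j).factorial)) *
        (∫ v in (0:ℝ)..1, ∫ u in (0:ℝ)..v,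
          Real.log u * Real.log v *
            (u ^ (i - 1) * (v - u) ^ (j - i - 1) * (1 - v) ^ (n - j)))
      - (digamma i - digamma ((n : ℝ) + 1)) * (digamma j - digamma ((n : ℝ) + 1))
      = trigamma j - trigamma ((n : ℝ) + 1) ∧
    ((n.factorial : ℝ) /
        ((i - 1).factorial * (j - i - 1).factorial * (n - j).factorial)) *
        (∫ v in (0:ℝ)..1, ∫ u in (0:ℝ)..v,
          Real.log (1 - u) * Real.log (1 - v) *
            (u ^ (i - 1) * (v - u) ^ (j - i - 1) * (1 - v) ^ (n - j)))
      - (digamma ((n : ℝ) + 1 - i) - digamma ((n : ℝ) + 1)) *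
          (digamma ((n : ℝ) + 1 - j) - digamma ((n : ℝ) + 1))
      = trigamma ((n : ℝ) + 1 - i) - trigamma ((n : ℝ) + 1) :=
  covariance_log_orderStats_general n i j hi1 hij hjn
end

section
/- Let n ≥ 2 and 1 ≤ i < j ≤ n. Then Cov[ln(1−U_(i)), ln(U_(j))] = (Γ(n+1)/Γ(i)) · Σ_{k=1}^∞ (Γ(i+k)/(k·Γ(n+1+k))) · (ψ(n+1+k) − ψ(j+k)) − (ψ(n+1−i) − ψ(n+1)) · (ψ(j) − ψ(n+1)), where the series converges, E[ln(1−U_(i)) ln(U_(j))] is the integral of (ln(1−u))(ln v) against the joint density c_{i,j,n} u^{i−1}(v−u)^{j−i−1}(1−v)^{n−j} over {0 < u < v < 1}, and Cov[X,Y] = E[XY] − E[X]E[Y]. -/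
/-!
Expanding `-log (1 - u) = ∑ₖ u ^ (k + 1) / (k + 1)` turns the inner integral over `u ∈ (0, v)` into
minus the series `∑ₖ v ^ (j + k) B(i + k + 1, j - i) / (k + 1)` of scaled Beta integrals. Against
`log v (1 - v) ^ (n - j)`, the power `v ^ (j + k)` integrates to the derivative
`∂ₛ B(s, n - j + 1) = B(s, n - j + 1) (ψ s - ψ (s + n - j + 1))` at `s = j + k + 1`. The two Beta
factors telescope to `Γ(i + k + 1) Γ(j - i) Γ(n - j + 1) / Γ(n + k + 2)`, and `c_{i,j,n}` cancels
`Γ(j - i) Γ(n - j + 1)`. Both exchanges of sum and integral are dominated convergence, with bounds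
`v ^ (k + 1)` and `1 / (k + 1) ^ 2` (the latter from `|log v| v ^ p ≤ 1 / p`).
-/

open MeasureTheory intervalIntegral

open Real Set ProbabilityTheory

theorem hasDerivAt_Gamma_digamma {x : ℝ} (hx : 0 < x) :
    HasDerivAt Gamma (Gamma x * digamma x) x := by
  have hΓ : HasDerivAt Gamma (deriv Gamma x) x :=
    (differentiableAt_Gamma fun m h => by linarith [h ▸ hx, m.cast_nonneg (α := ℝ)]).hasDerivAt
  have hψ : digamma x = deriv Gamma x / Gamma x := (hΓ.log (Gamma_pos_of_pos hx).ne').deriv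
  rwa [hψ, mul_div_cancel₀ _ (Gamma_pos_of_pos hx).ne']

theorem hasDerivAt_beta_left {s t : ℝ} (hs : 0 < s) (ht : 0 < t) :
    HasDerivAt (fun s => beta s t) (beta s t * (digamma s - digamma (s + t))) s := by
  have hst : 0 < s + t := hs.trans (lt_add_of_pos_right s ht)
  have hnum := (hasDerivAt_Gamma_digamma hs).mul_const (Gamma t)
  have hden := (hasDerivAt_Gamma_digamma hst).comp_add_const s t
  refine (hnum.div hden (Gamma_pos_of_pos hst).ne').congr_deriv ?_
  simp only [beta]
  field_simp

theorem integral_rpow_mul_one_sub_rpow_eq_beta {s t : ℝ} (hs : 0 < s) (ht : 0 < t) :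
    ∫ x in (0:ℝ)..1, x ^ (s - 1) * (1 - x) ^ (t - 1) = beta s t := by
  have hcast : ((∫ x in (0:ℝ)..1, x ^ (s - 1) * (1 - x) ^ (t - 1) : ℝ) : ℂ) =
      Complex.betaIntegral s t := by
    rw [← intervalIntegral.integral_ofReal, Complex.betaIntegral]
    refine intervalIntegral.integral_congr fun x hx => ?_
    rw [uIcc_of_le zero_le_one] at hx
    push_cast
    rw [Complex.ofReal_cpow hx.1, Complex.ofReal_cpow (sub_nonneg.2 hx.2)]
    push_cast
    rfl
  rw [beta_eq_betaIntegralReal s t hs ht, ← hcast, Complex.ofReal_re]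

theorem integral_rpow_mul_one_sub_pow_eq_beta {s : ℝ} (hs : 0 < s) (m : ℕ) :
    ∫ x in (0:ℝ)..1, x ^ (s - 1) * (1 - x) ^ m = beta s (m + 1) := by
  rw [← integral_rpow_mul_one_sub_rpow_eq_beta hs (by positivity)]
  simp only [add_sub_cancel_right, rpow_natCast]

theorem integral_pow_mul_sub_pow_eq_beta (p q : ℕ) {v : ℝ} (hv : 0 < v) :
    ∫ u in (0:ℝ)..v, u ^ p * (v - u) ^ q = v ^ (p + q + 1) * beta (p + 1) (q + 1) := by
  have hscale := intervalIntegral.integral_comp_mul_left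
    (fun u => u ^ p * (v - u) ^ q) (a := 0) (b := 1) hv.ne'
  simp only [mul_zero, mul_one, smul_eq_mul] at hscale
  rw [← integral_rpow_mul_one_sub_pow_eq_beta (by positivity : (0:ℝ) < p + 1) q,
    ← intervalIntegral.integral_const_mul, ← mul_right_inj' (inv_ne_zero hv.ne'), ← hscale,
    ← intervalIntegral.integral_const_mul]
  refine intervalIntegral.integral_congr fun x _ => ?_
  simp only [add_sub_cancel_right, rpow_natCast]
  rw [show v - v * x = v * (1 - x) by ring, mul_pow, mul_pow]
  field_simp
  ring

theorem beta_natCast_add_one_le_one (p q : ℕ) : beta (p + 1) (q + 1) ≤ 1 := by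
  have hdvd := Nat.factorial_mul_factorial_dvd_factorial_add p q
  have hle : (p.factorial * q.factorial : ℝ) ≤ (p + q + 1).factorial := by
    exact_mod_cast (Nat.le_of_dvd (Nat.factorial_pos _) hdvd).trans (Nat.factorial_le (by omega))
  rw [beta, show (p:ℝ) + 1 + (q + 1) = ((p + q + 1 : ℕ) : ℝ) + 1 by push_cast; ring]
  simp only [Gamma_nat_eq_factorial]
  exact div_le_one_of_le₀ hle (by positivity)

theorem hasDerivAt_integral_rpow_mul_one_sub_pow {s : ℝ} (hs : 1 < s) (m : ℕ) :
    HasDerivAt (fun s => ∫ x in (0:ℝ)..1, x ^ (s - 1) * (1 - x) ^ m)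
      (∫ x in (0:ℝ)..1, log x * x ^ (s - 1) * (1 - x) ^ m) s := by
  set e := (s - 1) / 2 with he
  have he0 : 0 < e := by rw [he]; linarith
  have hcont (r : ℝ) (hr : 1 ≤ r) : Continuous fun x : ℝ => x ^ (r - 1) * (1 - x) ^ m := by
    have := continuous_rpow_const (sub_nonneg.2 hr)
    fun_prop
  refine (intervalIntegral.hasDerivAt_integral_of_dominated_loc_of_deriv_le
    (F' := fun r x => log x * x ^ (r - 1) * (1 - x) ^ m) (bound := fun _ => 1 / e)
    (Metric.ball_mem_nhds s he0)
    ((eventually_gt_nhds hs).mono fun r hr => (hcont r hr.le).aestronglyMeasurable)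
    ((hcont s hs.le).intervalIntegrable 0 1) (by fun_prop) ?_ intervalIntegrable_const ?_).2
  · refine ae_of_all _ fun x hx r hr => ?_
    rw [uIoc_of_le zero_le_one] at hx
    have hr' : e ≤ r - 1 := by
      rw [Metric.mem_ball, dist_eq_norm, norm_eq_abs, abs_lt] at hr
      rw [he]; linarith
    have h1x : 0 ≤ 1 - x := sub_nonneg.2 hx.2
    calc ‖log x * x ^ (r - 1) * (1 - x) ^ m‖
        = |log x| * x ^ (r - 1) * (1 - x) ^ m := by
          rw [norm_eq_abs, abs_mul, abs_mul, abs_of_pos (rpow_pos_of_pos hx.1 _),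
            abs_of_nonneg (pow_nonneg h1x _)]
      _ ≤ |log x| * x ^ e * 1 :=
          mul_le_mul (mul_le_mul_of_nonneg_left (rpow_le_rpow_of_exponent_ge hx.1 hx.2 hr')
            (abs_nonneg _)) (pow_le_one₀ h1x (by linarith [hx.1])) (pow_nonneg h1x m)
            (mul_nonneg (abs_nonneg _) (rpow_nonneg hx.1.le _))
      _ ≤ 1 / e := by
          rw [mul_one, ← abs_of_pos (rpow_pos_of_pos hx.1 e), ← abs_mul]
          exact (abs_log_mul_self_rpow_lt x e hx.1 hx.2 he0).le
  · refine ae_of_all _ fun x hx r _ => ?_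
    rw [uIoc_of_le zero_le_one] at hx
    have := (((hasDerivAt_id r).sub_const 1).const_rpow hx.1).mul_const ((1 - x) ^ m)
    exact this.congr_deriv (by simp)

theorem integral_log_mul_rpow_mul_one_sub_pow {s : ℝ} (hs : 1 < s) (m : ℕ) :
    ∫ x in (0:ℝ)..1, log x * x ^ (s - 1) * (1 - x) ^ m =
      beta s (m + 1) * (digamma s - digamma (s + (m + 1))) := by
  have hbeta : (fun s => ∫ x in (0:ℝ)..1, x ^ (s - 1) * (1 - x) ^ m) =ᶠ[nhds s]
      fun s => beta s (m + 1) :=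
    (eventually_gt_nhds (zero_lt_one.trans hs)).mono fun r hr =>
      integral_rpow_mul_one_sub_pow_eq_beta hr m
  exact (hasDerivAt_integral_rpow_mul_one_sub_pow hs m).unique
    ((hasDerivAt_beta_left (zero_lt_one.trans hs) (by positivity)).congr_of_eventuallyEq hbeta)

theorem hasSum_neg_integral_log_one_sub_mul_pow_mul_sub_pow (a b : ℕ) {v : ℝ}
    (hv0 : 0 < v) (hv1 : v < 1) :
    HasSum (fun k : ℕ => v ^ (a + b + k + 2) / (k + 1) * beta (a + k + 2) (b + 1))
      (-∫ u in (0:ℝ)..v, log (1 - u) * (u ^ a * (v - u) ^ b)) := by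
  have hterm (k : ℕ) : ∫ u in Ioc 0 v, u ^ (k + 1) / (k + 1) * (u ^ a * (v - u) ^ b) =
      v ^ (a + b + k + 2) / (k + 1) * beta (a + k + 2) (b + 1) := by
    rw [← intervalIntegral.integral_of_le hv0.le]
    simp_rw [div_mul_eq_mul_div, ← mul_assoc, ← pow_add]
    rw [intervalIntegral.integral_div, integral_pow_mul_sub_pow_eq_beta _ _ hv0]
    push_cast
    ring_nf
  rw [intervalIntegral.integral_of_le hv0.le, ← MeasureTheory.integral_neg]
  refine funext hterm ▸ hasSum_integral_of_dominated_convergence (fun k _ => v ^ (k + 1))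
    (fun k => by fun_prop) (fun k => ?_) (ae_of_all _ fun _ => ?_) (integrable_const _) ?_
  · filter_upwards [ae_restrict_mem measurableSet_Ioc] with u ⟨hu0, huv⟩
    have hvu : 0 ≤ v - u := sub_nonneg.2 huv
    have hpow : u ^ (k + 1) / (k + 1) ≤ v ^ (k + 1) :=
      (div_le_self (by positivity) (by simp)).trans (pow_le_pow_left₀ hu0.le huv _)
    have hrest : u ^ a * (v - u) ^ b ≤ 1 :=
      mul_le_one₀ (pow_le_one₀ hu0.le (by linarith)) (by positivity)
        (pow_le_one₀ hvu (by linarith))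
    rw [norm_of_nonneg (by positivity)]
    simpa using mul_le_mul hpow hrest (by positivity) (by positivity)
  · exact ((summable_geometric_of_lt_one hv0.le hv1).mul_left v).congr fun k =>
      (pow_succ' v k).symm
  · filter_upwards [ae_restrict_mem measurableSet_Ioc] with u ⟨hu0, huv⟩
    have hu : |u| < 1 := by rw [abs_of_pos hu0]; linarith
    simpa [neg_mul] using (hasSum_pow_div_log_of_abs_lt_one hu).mul_right (u ^ a * (v - u) ^ b)

theorem hasSum_integral_log_one_sub_mul_log (a b c : ℕ) :
    HasSum (fun k : ℕ => beta (a + k + 2) (b + 1) / (k + 1) * beta (a + b + k + 3) (c + 1) *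
        (digamma (a + b + k + 3 + (c + 1)) - digamma (a + b + k + 3)))
      (∫ v in (0:ℝ)..1, ∫ u in (0:ℝ)..v,
        log (1 - u) * log v * (u ^ a * (v - u) ^ b * (1 - v) ^ c)) := by
  set F : ℕ → ℝ → ℝ := fun k v =>
    -log v * (1 - v) ^ c * (v ^ (a + b + k + 2) / (k + 1) * beta (a + k + 2) (b + 1)) with hF
  have hterm (k : ℕ) : ∫ v in Ioo 0 1, F k v = beta (a + k + 2) (b + 1) / (k + 1) *
      beta (a + b + k + 3) (c + 1) *
        (digamma (a + b + k + 3 + (c + 1)) - digamma (a + b + k + 3)) := by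
    have hs : (1:ℝ) < a + b + k + 3 := by linarith [(a + b + k : ℕ).cast_nonneg (α := ℝ)]
    have hlog := integral_log_mul_rpow_mul_one_sub_pow hs c
    have hexp : (a + b + k + 3 - 1 : ℝ) = (a + b + k + 2 : ℕ) := by push_cast; ring
    have hFk : F k = fun v => -(beta (a + k + 2) (b + 1) / (k + 1)) *
        (log v * v ^ (a + b + k + 3 - 1 : ℝ) * (1 - v) ^ c) := by
      funext v
      rw [hexp, rpow_natCast, hF]
      ring
    rw [← integral_Ioc_eq_integral_Ioo, ← intervalIntegral.integral_of_le zero_le_one, hFk,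
      intervalIntegral.integral_const_mul, hlog]
    ring
  have hinner : ∀ᵐ v ∂(volume.restrict (Ioo (0:ℝ) 1)), HasSum (fun k => F k v)
      (∫ u in (0:ℝ)..v, log (1 - u) * log v * (u ^ a * (v - u) ^ b * (1 - v) ^ c)) := by
    filter_upwards [ae_restrict_mem measurableSet_Ioo] with v ⟨hv0, hv1⟩
    have hfactor : ∫ u in (0:ℝ)..v, log (1 - u) * log v * (u ^ a * (v - u) ^ b * (1 - v) ^ c) =
        -log v * (1 - v) ^ c * -∫ u in (0:ℝ)..v, log (1 - u) * (u ^ a * (v - u) ^ b) := by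
      rw [← intervalIntegral.integral_neg, ← intervalIntegral.integral_const_mul]
      congr 1
      funext u
      ring
    rw [hfactor]
    exact (hasSum_neg_integral_log_one_sub_mul_pow_mul_sub_pow a b hv0 hv1).mul_left _
  rw [intervalIntegral.integral_of_le zero_le_one, integral_Ioc_eq_integral_Ioo]
  refine funext hterm ▸ hasSum_integral_of_dominated_convergence (fun k _ => 1 / (k + 1) ^ 2)
    (fun k => by fun_prop) (fun k => ?_) (ae_of_all _ fun _ => ?_) (integrable_const _) hinner
  · filter_upwards [ae_restrict_mem measurableSet_Ioo] with v ⟨hv0, hv1⟩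
    have hp : (k + 1 : ℝ) ≤ (a + b + k + 2 : ℕ) := by
      push_cast
      linarith [(a + b : ℕ).cast_nonneg (α := ℝ)]
    have hlog : |log v * v ^ (a + b + k + 2)| ≤ 1 / (k + 1) := by
      rw [← rpow_natCast]
      exact (abs_log_mul_self_rpow_lt v _ hv0 hv1.le (by positivity)).le.trans
        (one_div_le_one_div_of_le (by positivity) hp)
    have h1v : |(1 - v) ^ c| ≤ 1 := by
      rw [abs_of_nonneg (pow_nonneg (by linarith) _)]
      exact pow_le_one₀ (by linarith) (by linarith)
    have hbeta : |beta (a + k + 2) (b + 1)| ≤ 1 := by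
      rw [abs_of_pos (beta_pos (by positivity) (by positivity))]
      exact_mod_cast beta_natCast_add_one_le_one (a + k + 1) b
    calc ‖F k v‖ = |log v * v ^ (a + b + k + 2)| * |(1 - v) ^ c| * |beta (a + k + 2) (b + 1)|
          / (k + 1) := by
          rw [hF, norm_eq_abs, ← abs_of_pos (by positivity : (0:ℝ) < k + 1)]
          simp only [abs_mul, abs_div, abs_neg]
          ring
      _ ≤ 1 / (k + 1) * 1 * 1 / (k + 1) := by gcongr
      _ = 1 / (k + 1) ^ 2 := by field_simp
  · exact_mod_cast (summable_nat_add_iff 1).2 (Real.summable_one_div_nat_pow.2 one_lt_two)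

theorem beta_mul_beta {x y : ℝ} (hx : 0 < x) (hy : 0 < y) (z : ℝ) :
    beta x y * beta (x + y) z = Gamma x * Gamma y * Gamma z / Gamma (x + y + z) := by
  have := (Gamma_pos_of_pos (add_pos hx hy)).ne'
  simp only [beta]
  field_simp

/-- The summand of index `k + 1` of `∑_{k ≥ 1} Γ(i+k) / (k Γ(n+1+k)) (ψ(n+1+k) - ψ(j+k))`. -/
noncomputable def logCovSummand (i j n : ℝ) (k : ℕ) : ℝ :=
  Gamma (i + ((k : ℝ) + 1)) / (((k : ℝ) + 1) * Gamma (n + 1 + ((k : ℝ) + 1))) *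
    (digamma (n + 1 + ((k : ℝ) + 1)) - digamma (j + ((k : ℝ) + 1)))

theorem hasSum_logCovSummand (a b c : ℕ) :
    HasSum (fun k => (b.factorial * c.factorial : ℝ) *
        logCovSummand (a + 1 : ℕ) (a + b + 2 : ℕ) (a + b + c + 2 : ℕ) k)
      (∫ v in (0:ℝ)..1, ∫ u in (0:ℝ)..v,
        log (1 - u) * log v * (u ^ a * (v - u) ^ b * (1 - v) ^ c)) := by
  refine (hasSum_integral_log_one_sub_mul_log a b c).congr_fun fun k => ?_
  rw [div_mul_eq_mul_div, show (a + b + k + 3 : ℝ) = a + k + 2 + (b + 1) by ring,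
    beta_mul_beta (by positivity) (by positivity), Gamma_nat_eq_factorial, Gamma_nat_eq_factorial,
    logCovSummand]
  push_cast
  ring_nf
  field_simp
  ring

theorem covariance_logOneSub_log_orderStats_general
    (n i j : ℕ) (hi1 : 1 ≤ i) (hij : i < j) (hjn : j ≤ n) :
    Summable (fun k : ℕ =>
      Real.Gamma ((i : ℝ) + ((k : ℝ) + 1)) /
          (((k : ℝ) + 1) * Real.Gamma ((n : ℝ) + 1 + ((k : ℝ) + 1))) *
        (digamma ((n : ℝ) + 1 + ((k : ℝ) + 1)) - digamma ((j : ℝ) + ((k : ℝ) + 1)))) ∧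
    ((n.factorial : ℝ) /
        ((i - 1).factorial * (j - i - 1).factorial * (n - j).factorial)) *
        (∫ v in (0:ℝ)..1, ∫ u in (0:ℝ)..v,
          Real.log (1 - u) * Real.log v *
            (u ^ (i - 1) * (v - u) ^ (j - i - 1) * (1 - v) ^ (n - j)))
      - (digamma ((n : ℝ) + 1 - i) - digamma ((n : ℝ) + 1)) *
          (digamma j - digamma ((n : ℝ) + 1))
      = (Real.Gamma ((n : ℝ) + 1) / Real.Gamma i) *
          (∑' k : ℕ,
            Real.Gamma ((i : ℝ) + ((k : ℝ) + 1)) /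
                (((k : ℝ) + 1) * Real.Gamma ((n : ℝ) + 1 + ((k : ℝ) + 1))) *
              (digamma ((n : ℝ) + 1 + ((k : ℝ) + 1)) - digamma ((j : ℝ) + ((k : ℝ) + 1))))
        - (digamma ((n : ℝ) + 1 - i) - digamma ((n : ℝ) + 1)) *
            (digamma j - digamma ((n : ℝ) + 1)) := by
  obtain ⟨a, rfl⟩ : ∃ a, i = a + 1 := ⟨i - 1, by omega⟩
  obtain ⟨b, rfl⟩ : ∃ b, j = a + b + 2 := ⟨j - a - 2, by omega⟩
  obtain ⟨c, rfl⟩ : ∃ c, n = a + b + c + 2 := ⟨n - (a + b + 2), by omega⟩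
  set S := logCovSummand (a + 1 : ℕ) (a + b + 2 : ℕ) (a + b + c + 2 : ℕ)
  have key : HasSum (fun k => (b.factorial * c.factorial : ℝ) * S k) _ :=
    hasSum_logCovSummand a b c
  show Summable S ∧ _ = _ * ∑' k, S k - _
  refine ⟨(summable_mul_left_iff (by positivity)).1 key.summable, ?_⟩
  rw [sub_left_inj, show a + 1 - 1 = a by omega, show a + b + 2 - (a + 1) - 1 = b by omega,
    show a + b + c + 2 - (a + b + 2) = c by omega, ← key.tsum_eq, tsum_mul_left,
    Gamma_nat_eq_factorial, Nat.cast_succ, Gamma_nat_eq_factorial]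
  field_simp

/-- For `1 ≤ i < j ≤ n`, with `(U_(i), U_(j))` the order statistics of
`n` i.i.d. uniforms on `[0,1]` (with joint density
`c_{i,j,n} u^{i−1}(v−u)^{j−i−1}(1−v)^{n−j}` on `{0 < u < v < 1}`,
`c_{i,j,n} = n!/((i−1)!(j−i−1)!(n−j)!)`):
`Cov[ln(1−U_(i)), ln U_(j)]
  = (Γ(n+1)/Γ(i)) Σ_{k=1}^∞ (Γ(i+k)/(k Γ(n+1+k))) (ψ(n+1+k) − ψ(j+k))
    − (ψ(n+1−i) − ψ(n+1))(ψ(j) − ψ(n+1))`,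
where the series converges, `Cov[X,Y] = E[XY] − E[X]E[Y]`,
`E[ln(1−U_(i))] = ψ(n+1−i) − ψ(n+1)` and `E[ln U_(j)] = ψ(j) − ψ(n+1)`.
The series over `k ≥ 1` is indexed below by `k : ℕ` via `k + 1`. -/
theorem covariance_logOneSub_log_orderStats
    (n i j : ℕ) (hn : 2 ≤ n) (hi1 : 1 ≤ i) (hij : i < j) (hjn : j ≤ n) :
    Summable (fun k : ℕ =>
      Real.Gamma ((i : ℝ) + ((k : ℝ) + 1)) /
          (((k : ℝ) + 1) * Real.Gamma ((n : ℝ) + 1 + ((k : ℝ) + 1))) *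
        (digamma ((n : ℝ) + 1 + ((k : ℝ) + 1)) - digamma ((j : ℝ) + ((k : ℝ) + 1)))) ∧
    ((n.factorial : ℝ) /
        ((i - 1).factorial * (j - i - 1).factorial * (n - j).factorial)) *
        (∫ v in (0:ℝ)..1, ∫ u in (0:ℝ)..v,
          Real.log (1 - u) * Real.log v *
            (u ^ (i - 1) * (v - u) ^ (j - i - 1) * (1 - v) ^ (n - j)))
      - (digamma ((n : ℝ) + 1 - i) - digamma ((n : ℝ) + 1)) *
          (digamma j - digamma ((n : ℝ) + 1))
      = (Real.Gamma ((n : ℝ) + 1) / Real.Gamma i) *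
          (∑' k : ℕ,
            Real.Gamma ((i : ℝ) + ((k : ℝ) + 1)) /
                (((k : ℝ) + 1) * Real.Gamma ((n : ℝ) + 1 + ((k : ℝ) + 1))) *
              (digamma ((n : ℝ) + 1 + ((k : ℝ) + 1)) - digamma ((j : ℝ) + ((k : ℝ) + 1))))
        - (digamma ((n : ℝ) + 1 - i) - digamma ((n : ℝ) + 1)) *
            (digamma j - digamma ((n : ℝ) + 1)) :=
  covariance_logOneSub_log_orderStats_general n i j hi1 hij hjn
end

section
/- Let n ≥ 1 and 1 ≤ i ≤ j ≤ n, and write μ_k = k/(n+1). Then Cov[ (U_(i) − μ_i)², (U_(j) − μ_j)² ] = 2μ_i²(1−μ_j)²/((n+2)(n+3)) + (μ_i(1−μ_j)/((n+2)(n+3))) · ( 3(1−3μ_i)(2−3μ_j)/(n+4) − (1−μ_i)μ_j/(n+2) ), where Cov[X,Y] = E[XY] − E[X]E[Y] and the expectations are taken over the order statistics of n i.i.d. uniform random variables on [0,1]. -/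
open MeasureTheory

/-- The `k`-th order statistic (0-based) of the tuple `x : Fin n → ℝ`, i.e. the `k`-th
value of the increasing rearrangement of `x`. -/
noncomputable def ordStat {n : ℕ} (x : Fin n → ℝ) (k : Fin n) : ℝ := x (Tuple.sort x k)

/-- The uniform distribution on the cube `[0,1]^n`: the product of `n` copies of
Lebesgue measure restricted to `[0,1]`. -/
noncomputable def unifCube (n : ℕ) : Measure (Fin n → ℝ) :=
  Measure.pi fun _ => volume.restrict (Set.Icc (0:ℝ) 1)

/-!
Expanding the squares reduces both sides to the mixed moments `E[U_(i)^a U_(j)^b]`, `a, b ≤ 2`,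
which are read off from the product formula (indices `0`-based)
`E[∏ₖ U_(k)^(p k)] = ∏_{m<n} (m+1) / (m+1 + p 0 + ⋯ + p m)`.
It is proved by induction on `n`. By symmetry each coordinate is the largest one with
probability `1/(n+1)`; given that the largest one is `t`, the other `n` coordinates are uniform
on `[0,t]^n`, and scaling by `t` turns their moment into `t^(n + p 0 + ⋯ + p (n-1))` times the
moment for `n` points. Integrating `(n+1) t^(n + p 0 + ⋯ + p n)` over `[0,1]` gives the last
factor.
-/

open scoped Pointwise

open Finset

section OrderStatistics

variable {n : ℕ}

lemma ordStat_eq_of_monotone (x : Fin n → ℝ) (σ : Equiv.Perm (Fin n))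
    (h : Monotone (x ∘ σ)) : ordStat x = x ∘ σ :=
  Tuple.unique_monotone (Tuple.monotone_sort x) h

lemma ordStat_comp_perm (x : Fin n → ℝ) (σ : Equiv.Perm (Fin n)) :
    ordStat (x ∘ σ) = ordStat x :=
  Tuple.comp_perm_comp_sort_eq_comp_sort

lemma ordStat_smul (x : Fin n → ℝ) {c : ℝ} (hc : 0 ≤ c) :
    ordStat (c • x) = c • ordStat x :=
  ordStat_eq_of_monotone _ _ fun _ _ hab =>
    mul_le_mul_of_nonneg_left (Tuple.monotone_sort x hab) hc

lemma ordStat_snoc (y : Fin n → ℝ) {t : ℝ} (h : ∀ k, y k ≤ t) :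
    ordStat (Fin.snoc y t) = Fin.snoc (ordStat y) t := by
  -- `Tuple.sort y`, extended by fixing `Fin.last n`
  let σ : Equiv.Perm (Fin (n + 1)) :=
    finSuccEquivLast.symm.permCongr (Equiv.optionCongr (Tuple.sort y))
  have hσ : (Fin.snoc y t : Fin (n + 1) → ℝ) ∘ σ = Fin.snoc (ordStat y) t := by
    ext k
    induction k using Fin.lastCases <;> simp [σ, ordStat]
  rw [← hσ]
  refine ordStat_eq_of_monotone _ _ (hσ ▸ fun a b hab => ?_)
  induction b using Fin.lastCases with
  | last =>
    induction a using Fin.lastCases with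
    | last => simp
    | cast a => simpa [ordStat] using h _
  | cast b =>
    induction a using Fin.lastCases with
    | last => exact absurd hab (Fin.castSucc_lt_last b).not_ge
    | cast a =>
      simp only [Fin.snoc_castSucc]
      exact Tuple.monotone_sort y (Fin.castSucc_le_castSucc_iff.mp hab)

lemma ordStat_le_iff (x : Fin n → ℝ) (k : Fin n) (t : ℝ) :
    ordStat x k ≤ t ↔ (k : ℕ) < #{m | x m ≤ t} := by
  refine (Tuple.lt_card_le_iff_apply_le_of_monotone (Tuple.monotone_sort x)).symm.trans ?_
  rw [Finset.card_equiv (Tuple.sort x) (t := {m | x m ≤ t}) (by simp)]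

lemma measurable_ordStat (k : Fin n) : Measurable fun x : Fin n → ℝ => ordStat x k := by
  refine measurable_of_Iic fun t => ?_
  simp only [Set.preimage, Set.mem_Iic, ordStat_le_iff, Finset.card_filter]
  refine measurableSet_lt measurable_const (Finset.measurable_sum _ fun m _ => ?_)
  exact Measurable.ite (measurableSet_le (measurable_pi_apply m) measurable_const)
    measurable_const measurable_const

end OrderStatistics

section UniformCube

variable {n : ℕ}

instance (n : ℕ) : IsProbabilityMeasure (unifCube n) := by
  have : IsProbabilityMeasure (volume.restrict (Set.Icc (0:ℝ) 1)) := ⟨by simp⟩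
  unfold unifCube
  infer_instance

lemma unifCube_eq_restrict (n : ℕ) :
    unifCube n = volume.restrict (Set.univ.pi fun _ : Fin n => Set.Icc (0:ℝ) 1) := by
  rw [unifCube, ← Measure.restrict_pi_pi]
  rfl

lemma ae_mem_Icc_unifCube : ∀ᵐ x ∂unifCube n, ∀ k, x k ∈ Set.Icc (0:ℝ) 1 := by
  rw [unifCube_eq_restrict]
  filter_upwards [ae_restrict_mem (MeasurableSet.univ_pi fun _ => measurableSet_Icc)] with x hx
  exact fun k => hx k (Set.mem_univ k)

lemma unifCube_coord_eq_null {a b : Fin n} (hab : a ≠ b) :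
    unifCube n {x | x a = x b} = 0 := by
  let L : (Fin n → ℝ) →ₗ[ℝ] ℝ :=
    LinearMap.proj (R := ℝ) (φ := fun _ => ℝ) a - LinearMap.proj b
  have hker : LinearMap.ker L ≠ ⊤ := fun h => by
    simpa [L, hab.symm] using LinearMap.congr_fun (LinearMap.ker_eq_top.mp h) (Pi.single a 1)
  have hset : {x : Fin n → ℝ | x a = x b} = LinearMap.ker L := by
    ext x; simp [L, sub_eq_zero]
  rw [unifCube_eq_restrict, hset]
  exact nonpos_iff_eq_zero.mp
    ((Measure.restrict_apply_le _ _).trans_eq (Measure.addHaar_submodule _ _ hker))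

lemma measurePreserving_piCongrLeft_unifCube (σ : Equiv.Perm (Fin n)) :
    MeasurePreserving (MeasurableEquiv.piCongrLeft (fun _ => ℝ) σ) (unifCube n) (unifCube n) :=
  measurePreserving_piCongrLeft (fun _ => volume.restrict (Set.Icc (0:ℝ) 1)) σ

lemma integral_unifCube_succ_eq_mul_setIntegral_of_symmetric {f : (Fin (n + 1) → ℝ) → ℝ}
    (hsymm : ∀ (σ : Equiv.Perm (Fin (n + 1))) x, f (x ∘ σ) = f x)
    (hf : Integrable f (unifCube (n + 1))) :
    ∫ x, f x ∂unifCube (n + 1) =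
      (n + 1) * ∫ x in {x | ∀ k, x k ≤ x (Fin.last n)}, f x ∂unifCube (n + 1) := by
  set A : Fin (n + 1) → Set (Fin (n + 1) → ℝ) := fun m => {x | ∀ k, x k ≤ x m}
  have hA : ∀ m, MeasurableSet (A m) := fun m => by
    simp only [A, Set.ofPred_forall]
    exact .iInter fun k => measurableSet_le (measurable_pi_apply k) (measurable_pi_apply m)
  have hcover : ⋃ m, A m = Set.univ := Set.eq_univ_of_forall fun x => by
    obtain ⟨m, -, hm⟩ := Finset.exists_max_image Finset.univ x Finset.univ_nonempty
    exact Set.mem_iUnion.2 ⟨m, fun k => hm k (Finset.mem_univ k)⟩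
  have hdisj : Pairwise fun a b => AEDisjoint (unifCube (n + 1)) (A a) (A b) := fun a b hab =>
    measure_mono_null (fun x hx => le_antisymm (hx.2 a) (hx.1 b)) (unifCube_coord_eq_null hab)
  have hswap : ∀ m,
      ∫ x in A m, f x ∂unifCube (n + 1) = ∫ x in A (Fin.last n), f x ∂unifCube (n + 1) := by
    intro m
    let σ := Equiv.swap m (Fin.last n)
    let e := MeasurableEquiv.piCongrLeft (fun _ => ℝ) σ.symm
    have he : ∀ x, e x = x ∘ σ := fun x => by
      ext k; simp [e, MeasurableEquiv.coe_piCongrLeft, Equiv.piCongrLeft_apply]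
    have hpre : e ⁻¹' A m = A (Fin.last n) := by
      ext x
      simp only [Set.mem_preimage, he, A, Set.mem_ofPred_eq, Function.comp_apply]
      rw [show σ m = Fin.last n from Equiv.swap_apply_left _ _]
      simpa using (σ.symm.forall_congr_left (p := fun k => x k ≤ x (Fin.last n))).symm
    rw [← (measurePreserving_piCongrLeft_unifCube σ.symm).setIntegral_preimage_emb
      e.measurableEmbedding, hpre]
    exact congrArg (integral _) (funext fun x => (congrArg f (he x)).trans (hsymm σ x))
  rw [← setIntegral_univ, ← hcover, integral_iUnion_ae (fun m => (hA m).nullMeasurableSet) hdisj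
    (hcover ▸ hf.integrableOn), tsum_fintype, Finset.sum_congr rfl fun m _ => hswap m,
    Finset.sum_const, Finset.card_univ, Fintype.card_fin, nsmul_eq_mul]
  push_cast
  rfl

lemma setIntegral_unifCube_succ_le_last {f : (Fin (n + 1) → ℝ) → ℝ}
    (hf : Integrable f (unifCube (n + 1))) :
    ∫ x in {x | ∀ k, x k ≤ x (Fin.last n)}, f x ∂unifCube (n + 1) =
      ∫ t in Set.Icc (0:ℝ) 1, ∫ y in Set.Iic fun _ => t, f (Fin.snoc y t) ∂unifCube n := by
  let e := (MeasurableEquiv.piFinSuccAbove (fun _ => ℝ) (Fin.last n)).symm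
  have he : ∀ p, e p = Fin.snoc p.2 p.1 := fun p => by simp [e]; rfl
  have hmp : MeasurePreserving e ((volume.restrict (Set.Icc (0:ℝ) 1)).prod (unifCube n))
      (unifCube (n + 1)) :=
    (measurePreserving_piFinSuccAbove (fun _ => volume.restrict (Set.Icc (0:ℝ) 1)) _).symm
  let S : Set (ℝ × (Fin n → ℝ)) := {p | p.2 ≤ fun _ => p.1}
  have hS : MeasurableSet S :=
    measurableSet_le measurable_snd (measurable_pi_lambda _ fun _ => measurable_fst)
  have hpre : e ⁻¹' {x | ∀ k, x k ≤ x (Fin.last n)} = S := by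
    ext p
    simp [he, S, Fin.forall_fin_succ', Pi.le_def]
  rw [← hmp.setIntegral_preimage_emb e.measurableEmbedding, hpre, ← integral_indicator hS,
    integral_prod (S.indicator fun p => f (e p))
      (((hmp.integrable_comp_emb e.measurableEmbedding).mpr hf).indicator hS)]
  refine integral_congr_ae (Filter.Eventually.of_forall fun t => ?_)
  dsimp only
  rw [← integral_indicator measurableSet_Iic]
  simp only [he]
  rfl

lemma setIntegral_Iic_unifCube_of_homogeneous {G : (Fin n → ℝ) → ℝ} {d : ℕ} {t : ℝ}
    (ht : t ∈ Set.Ioc 0 1) (hG : ∀ y, G (t • y) = t ^ d * G y) :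
    ∫ y in Set.Iic fun _ => t, G y ∂unifCube n = t ^ (n + d) * ∫ y, G y ∂unifCube n := by
  set B := Set.univ.pi fun _ : Fin n => Set.Icc (0:ℝ) 1
  have hB : (Set.Iic fun _ => t) ∩ B = t • B := by
    ext y
    rw [Set.mem_smul_set_iff_inv_smul_mem₀ ht.1.ne']
    simp only [B, Set.mem_inter_iff, Set.mem_Iic, Pi.le_def, Set.mem_pi, Set.mem_univ,
      true_implies, Set.mem_Icc, Pi.smul_apply, smul_eq_mul, ← forall_and]
    refine forall_congr' fun k => ?_
    rw [inv_mul_le_iff₀ ht.1, mul_one, mul_nonneg_iff_of_pos_left (inv_pos.2 ht.1)]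
    exact ⟨fun h => ⟨h.2.1, h.1⟩, fun h => ⟨h.2, h.1, h.2.trans ht.2⟩⟩
  have hscale := Measure.setIntegral_comp_smul_of_pos volume G B ht.1
  simp only [Module.finrank_fin_fun, hG, integral_const_mul, smul_eq_mul] at hscale
  rw [unifCube_eq_restrict, Measure.restrict_restrict measurableSet_Iic, hB, pow_add,
    mul_assoc, hscale, mul_inv_cancel_left₀ (pow_ne_zero _ ht.1.ne')]

end UniformCube

lemma integrable_prod_ordStat_pow {n : ℕ} (p : ℕ → ℕ) :
    Integrable (fun x => ∏ k : Fin n, ordStat x k ^ p k) (unifCube n) := by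
  refine Integrable.mono' (integrable_const 1)
    (Finset.measurable_prod _ fun k _ => (measurable_ordStat k).pow_const _).aestronglyMeasurable ?_
  filter_upwards [ae_mem_Icc_unifCube] with x hx
  rw [norm_prod]
  refine Finset.prod_le_one (fun _ _ => norm_nonneg _) fun k _ => ?_
  have hk : ordStat x k ∈ Set.Icc (0:ℝ) 1 := hx _
  rw [norm_pow, Real.norm_of_nonneg hk.1]
  exact pow_le_one₀ hk.1 hk.2

theorem integral_prod_ordStat_pow (p : ℕ → ℕ) : ∀ n : ℕ,
    ∫ x, ∏ k : Fin n, ordStat x k ^ p k ∂unifCube n =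
      ∏ m ∈ range n, ((m : ℝ) + 1) / ((m : ℝ) + 1 + ∑ k ∈ range (m + 1), p k)
  | 0 => by simp
  | n + 1 => by
    have hsymm : ∀ (σ : Equiv.Perm (Fin (n + 1))) x,
        ∏ k, ordStat (x ∘ σ) k ^ p k = ∏ k, ordStat x k ^ p k := by
      simp [ordStat_comp_perm]
    have hsnoc : ∀ t (y : Fin n → ℝ), y ∈ Set.Iic (fun _ => t) →
        ∏ k : Fin (n + 1), ordStat (Fin.snoc y t) k ^ p k =
          (∏ k : Fin n, ordStat y k ^ p k) * t ^ p n := by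
      intro t y hy
      rw [ordStat_snoc y hy, Fin.prod_univ_castSucc]
      simp
    have hhom : ∀ t : ℝ, 0 ≤ t → ∀ y : Fin n → ℝ,
        ∏ k, ordStat (t • y) k ^ p k =
          t ^ (∑ k ∈ range n, p k) * ∏ k, ordStat y k ^ p k := by
      intro t ht y
      simp [ordStat_smul y ht, mul_pow, prod_mul_distrib, prod_pow_eq_pow_sum,
        Fin.sum_univ_eq_sum_range]
    have hinner : ∀ t ∈ Set.Ioc (0:ℝ) 1,
        ∫ y in Set.Iic fun _ => t, ∏ k : Fin (n + 1), ordStat (Fin.snoc y t) k ^ p k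
            ∂unifCube n =
          t ^ (n + ∑ k ∈ range (n + 1), p k) *
            ∫ y, ∏ k : Fin n, ordStat y k ^ p k ∂unifCube n := by
      intro t ht
      rw [setIntegral_congr_fun measurableSet_Iic (hsnoc t), integral_mul_const,
        setIntegral_Iic_unifCube_of_homogeneous ht (hhom t ht.1.le), sum_range_succ]
      ring
    rw [integral_unifCube_succ_eq_mul_setIntegral_of_symmetric hsymm
        (integrable_prod_ordStat_pow p),
      setIntegral_unifCube_succ_le_last (integrable_prod_ordStat_pow p),
      integral_Icc_eq_integral_Ioc,
      setIntegral_congr_fun measurableSet_Ioc hinner, integral_mul_const,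
      ← intervalIntegral.integral_of_le zero_le_one, integral_pow, integral_prod_ordStat_pow p n,
      prod_range_succ]
    field_simp
    push_cast
    ring

lemma prod_Ico_div_eq_ascFactorial_div (c : ℕ) {l r : ℕ} (h : l ≤ r) :
    ∏ m ∈ Ico l r, ((m : ℝ) + 1) / ((m : ℝ) + 1 + c) =
      ((l + 1).ascFactorial c : ℝ) / (r + 1).ascFactorial c := by
  have hne : ∀ m : ℕ, ((m + 1).ascFactorial c : ℝ) ≠ 0 := fun m =>
    Nat.cast_ne_zero.2 (Nat.ascFactorial_pos _ _).ne'
  induction r, h using Nat.le_induction with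
  | base => rw [Ico_self, prod_empty, div_self (hne l)]
  | succ r hlr ih =>
    have key : ((r : ℝ) + 1) * (r + 1 + 1).ascFactorial c =
        (r + 1 + c) * (r + 1).ascFactorial c := by
      exact_mod_cast Nat.succ_ascFactorial (r + 1) c
    rw [prod_Ico_succ_top hlr, ih, div_mul_div_comm,
      div_eq_div_iff (mul_ne_zero (hne r) (by positivity)) (hne (r + 1))]
    linear_combination ((l + 1).ascFactorial c : ℝ) * key

lemma prod_pow_ite_add_ite {n : ℕ} (f : Fin n → ℝ) (i j : Fin n) (a b : ℕ) :
    ∏ k : Fin n, f k ^ ((if (k : ℕ) = i then a else 0) + (if (k : ℕ) = j then b else 0)) =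
      f i ^ a * f j ^ b := by
  simp only [pow_add, prod_mul_distrib, pow_ite, pow_zero, Fin.val_inj, prod_ite_eq', mem_univ,
    if_true]

lemma integrable_ordStat_pow_mul_pow {n : ℕ} (i j : Fin n) (a b : ℕ) :
    Integrable (fun x => ordStat x i ^ a * ordStat x j ^ b) (unifCube n) := by
  simpa only [prod_pow_ite_add_ite] using integrable_prod_ordStat_pow (n := n)
    fun k => (if k = i then a else 0) + (if k = j then b else 0)

theorem integral_ordStat_pow_mul_pow {n : ℕ} {i j : Fin n} (hij : i ≤ j) (a b : ℕ) :
    ∫ x, ordStat x i ^ a * ordStat x j ^ b ∂unifCube n =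
      ((i + 1 : ℕ).ascFactorial a : ℝ) / (j + 1 : ℕ).ascFactorial a *
        ((j + 1 : ℕ).ascFactorial (a + b) / (n + 1 : ℕ).ascFactorial (a + b)) := by
  have hsum : ∀ m,
      ∑ k ∈ range (m + 1), ((if k = i then a else 0) + (if k = j then b else 0)) =
      (if (i : ℕ) ≤ m then a else 0) + (if (j : ℕ) ≤ m then b else 0) := by
    intro m
    simp [sum_add_distrib]
  have hij' : (i : ℕ) ≤ j := hij
  have hmoment := integral_prod_ordStat_pow
    (fun k => (if k = i then a else 0) + (if k = j then b else 0)) n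
  simp only [prod_pow_ite_add_ite, hsum] at hmoment
  rw [hmoment, ← prod_range_mul_prod_Ico _ j.isLt.le, ← prod_range_mul_prod_Ico _ hij',
    prod_eq_one fun m hm => ?_, one_mul, ← prod_Ico_div_eq_ascFactorial_div a hij',
    ← prod_Ico_div_eq_ascFactorial_div (a + b) j.isLt.le]
  · congr 1 <;> refine prod_congr rfl fun m hm => ?_ <;> rw [mem_Ico] at hm
    · simp [hm.1, Nat.not_le.2 hm.2]
    · simp [hm.1, hij'.trans hm.1]
  · rw [mem_range] at hm
    simp [Nat.not_le.2 hm, Nat.not_le.2 (hm.trans_le hij'), Nat.cast_add_one_ne_zero]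

lemma integral_sub_pow_mul_sub_pow {Ω : Type*} [MeasurableSpace Ω] {μ : Measure Ω}
    {X Y : Ω → ℝ} (h : ∀ a b : ℕ, Integrable (fun ω => X ω ^ a * Y ω ^ b) μ)
    (α β : ℝ) (P Q : ℕ) :
    ∫ ω, (X ω - α) ^ P * (Y ω - β) ^ Q ∂μ =
      ∑ a ∈ range (P + 1), ∑ b ∈ range (Q + 1),
        (-α) ^ (P - a) * (-β) ^ (Q - b) * (P.choose a * Q.choose b) *
          ∫ ω, X ω ^ a * Y ω ^ b ∂μ := by
  have hexp : ∀ ω, (X ω - α) ^ P * (Y ω - β) ^ Q =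
      ∑ a ∈ range (P + 1), ∑ b ∈ range (Q + 1),
        (-α) ^ (P - a) * (-β) ^ (Q - b) * (P.choose a * Q.choose b) * (X ω ^ a * Y ω ^ b) := by
    intro ω
    rw [sub_eq_add_neg, sub_eq_add_neg, add_pow, add_pow, sum_mul_sum]
    refine sum_congr rfl fun a _ => sum_congr rfl fun b _ => ?_
    ring
  simp_rw [hexp]
  rw [integral_finsetSum _ fun a _ => integrable_finsetSum _ fun b _ => (h a b).const_mul _]
  refine sum_congr rfl fun a _ => ?_
  rw [integral_finsetSum _ fun b _ => (h a b).const_mul _]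
  simp_rw [integral_const_mul]

theorem covariance_squared_deviations_orderStats_general
    (n : ℕ) (i j : Fin n) (hij : i ≤ j) :
    (∫ x, (ordStat x i - ((i : ℕ) + 1) / ((n : ℝ) + 1)) ^ 2 *
          (ordStat x j - ((j : ℕ) + 1) / ((n : ℝ) + 1)) ^ 2 ∂(unifCube n))
      - (∫ x, (ordStat x i - ((i : ℕ) + 1) / ((n : ℝ) + 1)) ^ 2 ∂(unifCube n)) *
          (∫ x, (ordStat x j - ((j : ℕ) + 1) / ((n : ℝ) + 1)) ^ 2 ∂(unifCube n))
      = 2 * (((i : ℕ) + 1) / ((n : ℝ) + 1)) ^ 2 *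
            (1 - ((j : ℕ) + 1) / ((n : ℝ) + 1)) ^ 2 / (((n : ℝ) + 2) * ((n : ℝ) + 3))
        + ((((i : ℕ) + 1) / ((n : ℝ) + 1)) * (1 - ((j : ℕ) + 1) / ((n : ℝ) + 1)) /
              (((n : ℝ) + 2) * ((n : ℝ) + 3))) *
            (3 * (1 - 3 * (((i : ℕ) + 1) / ((n : ℝ) + 1))) *
                (2 - 3 * (((j : ℕ) + 1) / ((n : ℝ) + 1))) / ((n : ℝ) + 4)
              - (1 - ((i : ℕ) + 1) / ((n : ℝ) + 1)) *
                  (((j : ℕ) + 1) / ((n : ℝ) + 1)) / ((n : ℝ) + 2)) := by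
  set μi : ℝ := ((i : ℕ) + 1) / ((n : ℝ) + 1) with hμi
  set μj : ℝ := ((j : ℕ) + 1) / ((n : ℝ) + 1) with hμj
  have hint := integrable_ordStat_pow_mul_pow i j
  have hcov := integral_sub_pow_mul_sub_pow hint μi μj 2 2
  have hvar_i := integral_sub_pow_mul_sub_pow hint μi 0 2 0
  have hvar_j := integral_sub_pow_mul_sub_pow hint 0 μj 0 2
  simp only [pow_zero, mul_one, one_mul] at hvar_i hvar_j
  rw [hcov, hvar_i, hvar_j, hμi, hμj]
  simp only [sum_range_succ, sum_range_zero, integral_ordStat_pow_mul_pow hij,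
    Nat.ascFactorial_succ, Nat.ascFactorial_zero]
  norm_num
  field_simp
  ring

/-- For `n ≥ 1` and order-statistic indices `i ≤ j` (0-based `i, j : Fin n`
corresponding to the 1-based indices `i+1 ≤ j+1`), with `μ_k = k/(n+1)` (1-based), the
covariance of `(U_(i) − μ_i)²` and `(U_(j) − μ_j)²` under the uniform distribution on
`[0,1]^n` equals
`2μ_i²(1−μ_j)²/((n+2)(n+3)) + (μ_i(1−μ_j)/((n+2)(n+3)))(3(1−3μ_i)(2−3μ_j)/(n+4) − (1−μ_i)μ_j/(n+2))`. -/
theorem covariance_squared_deviations_orderStats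
    (n : ℕ) (hn : 1 ≤ n) (i j : Fin n) (hij : i ≤ j) :
    (∫ x, (ordStat x i - ((i : ℕ) + 1) / ((n : ℝ) + 1)) ^ 2 *
          (ordStat x j - ((j : ℕ) + 1) / ((n : ℝ) + 1)) ^ 2 ∂(unifCube n))
      - (∫ x, (ordStat x i - ((i : ℕ) + 1) / ((n : ℝ) + 1)) ^ 2 ∂(unifCube n)) *
          (∫ x, (ordStat x j - ((j : ℕ) + 1) / ((n : ℝ) + 1)) ^ 2 ∂(unifCube n))
      = 2 * (((i : ℕ) + 1) / ((n : ℝ) + 1)) ^ 2 *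
            (1 - ((j : ℕ) + 1) / ((n : ℝ) + 1)) ^ 2 / (((n : ℝ) + 2) * ((n : ℝ) + 3))
        + ((((i : ℕ) + 1) / ((n : ℝ) + 1)) * (1 - ((j : ℕ) + 1) / ((n : ℝ) + 1)) /
              (((n : ℝ) + 2) * ((n : ℝ) + 3))) *
            (3 * (1 - 3 * (((i : ℕ) + 1) / ((n : ℝ) + 1))) *
                (2 - 3 * (((j : ℕ) + 1) / ((n : ℝ) + 1))) / ((n : ℝ) + 4)
              - (1 - ((i : ℕ) + 1) / ((n : ℝ) + 1)) *
                  (((j : ℕ) + 1) / ((n : ℝ) + 1)) / ((n : ℝ) + 2)) :=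
  covariance_squared_deviations_orderStats_general n i j hij
end

section
/- Let c > 0 and define ψ(t) = c / (t²(1−t)²) for t ∈ (0,1). Then for every s ∈ (0,1), both integrals below converge and 2(1−s)² ∫₀^s t² ψ(t) dt + 2s² ∫_s^1 (1−t)² ψ(t) dt = 4c · s(1−s). In particular, the weight function ψ(t) ∝ 1/(t²(1−t)²) solves the continuum-limit Lagrange optimality equation for minimum-variance weights with multiplier λ = c. -/
/-!
On `(0, 1)` the weight cancels the polynomial factors: `t² ψ(t) = c / (1 - t)²` and
`(1 - t)² ψ(t) = c / t²`, so `∫₀^s t² ψ = c s / (1 - s)` and `∫_s^1 (1 - t)² ψ = c (1 - s) / s`.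
Both terms of the left-hand side then equal `2 c s (1 - s)`. The second integral is the first one
read through the symmetry `ψ(1 - t) = ψ(t)`.
-/

open MeasureTheory intervalIntegral

noncomputable def optimalWeight (c t : ℝ) : ℝ := c / (t ^ 2 * (1 - t) ^ 2)

lemma optimalWeight_one_sub (c t : ℝ) : optimalWeight c (1 - t) = optimalWeight c t := by
  unfold optimalWeight
  ring_nf

lemma sq_mul_optimalWeight (c : ℝ) {t : ℝ} (ht : t ≠ 0) :
    t ^ 2 * optimalWeight c t = c / (1 - t) ^ 2 := by
  unfold optimalWeight
  rcases eq_or_ne (1 - t) 0 with h | h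
  · simp [h]
  · field_simp

lemma hasDerivAt_div_one_sub (c : ℝ) {t : ℝ} (ht : 1 - t ≠ 0) :
    HasDerivAt (fun x => c / (1 - x)) (c / (1 - t) ^ 2) t :=
  ((hasDerivAt_const t c).div ((hasDerivAt_id' t).const_sub 1) ht).congr_deriv (by ring)

section

variable {a b : ℝ}

lemma intervalIntegrable_div_one_sub_sq (c : ℝ) (hab : a ≤ b) (hb : b < 1) :
    IntervalIntegrable (fun t => c / (1 - t) ^ 2) volume a b := by
  refine ContinuousOn.intervalIntegrable (continuousOn_const.div (by fun_prop) fun t ht => ?_)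
  rw [Set.uIcc_of_le hab] at ht
  have : 0 < 1 - t := by linarith [ht.2]
  positivity

lemma integral_div_one_sub_sq (c : ℝ) (hab : a ≤ b) (hb : b < 1) :
    ∫ t in a..b, c / (1 - t) ^ 2 = c / (1 - b) - c / (1 - a) := by
  refine integral_eq_sub_of_hasDerivAt (fun t ht => hasDerivAt_div_one_sub c ?_)
    (intervalIntegrable_div_one_sub_sq c hab hb)
  rw [Set.uIcc_of_le hab] at ht
  linarith [ht.2]

lemma eqOn_sq_mul_optimalWeight (c : ℝ) (ha : 0 ≤ a) (hab : a ≤ b) :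
    Set.EqOn (fun t => t ^ 2 * optimalWeight c t) (fun t => c / (1 - t) ^ 2) (Set.uIoc a b) :=
  fun t ht => by
    rw [Set.uIoc_of_le hab] at ht
    exact sq_mul_optimalWeight c (by linarith [ht.1])

lemma intervalIntegrable_sq_mul_optimalWeight (c : ℝ) (ha : 0 ≤ a) (hab : a ≤ b) (hb : b < 1) :
    IntervalIntegrable (fun t => t ^ 2 * optimalWeight c t) volume a b :=
  (intervalIntegrable_congr (eqOn_sq_mul_optimalWeight c ha hab)).2
    (intervalIntegrable_div_one_sub_sq c hab hb)

lemma integral_sq_mul_optimalWeight (c : ℝ) (ha : 0 ≤ a) (hab : a ≤ b) (hb : b < 1) :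
    ∫ t in a..b, t ^ 2 * optimalWeight c t = c / (1 - b) - c / (1 - a) := by
  rw [integral_congr_ae (.of_forall (eqOn_sq_mul_optimalWeight c ha hab)),
    integral_div_one_sub_sq c hab hb]

lemma intervalIntegrable_one_sub_sq_mul_optimalWeight (c : ℝ) (ha : 0 < a) (hab : a ≤ b)
    (hb : b ≤ 1) : IntervalIntegrable (fun t => (1 - t) ^ 2 * optimalWeight c t) volume a b := by
  have h := (intervalIntegrable_sq_mul_optimalWeight c (a := 1 - b) (b := 1 - a)
    (by linarith) (by linarith) (by linarith)).comp_sub_left 1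
  simpa only [optimalWeight_one_sub, sub_sub_cancel] using h.symm

lemma integral_one_sub_sq_mul_optimalWeight (c : ℝ) (ha : 0 < a) (hab : a ≤ b) (hb : b ≤ 1) :
    ∫ t in a..b, (1 - t) ^ 2 * optimalWeight c t = c / a - c / b := by
  have h := integral_comp_sub_left (fun u => u ^ 2 * optimalWeight c u) 1 (a := a) (b := b)
  simp only [optimalWeight_one_sub] at h
  rw [h, integral_sq_mul_optimalWeight c (by linarith) (by linarith) (by linarith),
    sub_sub_cancel, sub_sub_cancel]

end

theorem optimal_weight_solves_lagrange_equation_general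
    (c : ℝ) (s : ℝ) (hs : s ∈ Set.Ioo (0:ℝ) 1) :
    IntervalIntegrable (fun t : ℝ => t ^ 2 * (c / (t ^ 2 * (1 - t) ^ 2))) volume 0 s ∧
    IntervalIntegrable (fun t : ℝ => (1 - t) ^ 2 * (c / (t ^ 2 * (1 - t) ^ 2))) volume s 1 ∧
    2 * (1 - s) ^ 2 * (∫ t in (0:ℝ)..s, t ^ 2 * (c / (t ^ 2 * (1 - t) ^ 2)))
      + 2 * s ^ 2 * (∫ t in s..(1:ℝ), (1 - t) ^ 2 * (c / (t ^ 2 * (1 - t) ^ 2)))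
      = 4 * c * (s * (1 - s)) := by
  obtain ⟨hs0, hs1⟩ := hs
  refine ⟨intervalIntegrable_sq_mul_optimalWeight c le_rfl hs0.le hs1,
    intervalIntegrable_one_sub_sq_mul_optimalWeight c hs0 hs1.le le_rfl, ?_⟩
  have h₁ : ∫ t in (0:ℝ)..s, t ^ 2 * optimalWeight c t = c / (1 - s) - c :=
    by simpa using integral_sq_mul_optimalWeight c le_rfl hs0.le hs1
  have h₂ : ∫ t in s..(1:ℝ), (1 - t) ^ 2 * optimalWeight c t = c / s - c :=
    by simpa using integral_one_sub_sq_mul_optimalWeight c hs0 hs1.le le_rfl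
  simp only [optimalWeight] at h₁ h₂
  rw [h₁, h₂]
  have : 1 - s ≠ 0 := by linarith
  field_simp
  ring

/-- With `ψ(t) = c/(t²(1−t)²)` for `c > 0`, for every `s ∈ (0,1)`
both integrals `∫₀^s t² ψ(t) dt` and `∫_s^1 (1−t)² ψ(t) dt` converge and
`2(1−s)² ∫₀^s t² ψ(t) dt + 2s² ∫_s^1 (1−t)² ψ(t) dt = 4c·s(1−s)`, i.e.
`ψ(t) ∝ 1/(t²(1−t)²)` solves the continuum-limit Lagrange optimality equation for
minimum-variance weights with multiplier `λ = c`. -/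
theorem optimal_weight_solves_lagrange_equation
    (c : ℝ) (hc : 0 < c) (s : ℝ) (hs : s ∈ Set.Ioo (0:ℝ) 1) :
    IntervalIntegrable (fun t : ℝ => t ^ 2 * (c / (t ^ 2 * (1 - t) ^ 2))) volume 0 s ∧
    IntervalIntegrable (fun t : ℝ => (1 - t) ^ 2 * (c / (t ^ 2 * (1 - t) ^ 2))) volume s 1 ∧
    2 * (1 - s) ^ 2 * (∫ t in (0:ℝ)..s, t ^ 2 * (c / (t ^ 2 * (1 - t) ^ 2)))
      + 2 * s ^ 2 * (∫ t in s..(1:ℝ), (1 - t) ^ 2 * (c / (t ^ 2 * (1 - t) ^ 2)))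
      = 4 * c * (s * (1 - s)) :=
  optimal_weight_solves_lagrange_equation_general c s hs
end

section
/- Let 0 < ε < 1/2 and let ω > 0 satisfy tan(ω · ln((1−ε)/ε)) = 1/(2ω). Set λ = ω² + 1/4 and f(t) = (t(1−t))^{−1/2} cos(ω · ln(t/(1−t))) for t ∈ [ε, 1−ε]. Then f satisfies the integral eigenvalue equation f(t) = λ ∫_ε^{1−ε} ((min(s,t) − st) / (s(1−s) t(1−t))) f(s) ds for every t ∈ [ε, 1−ε]. -/
open MeasureTheory intervalIntegral

/-!
In the logit variable `u = log (s / (1 - s))`, for which `du = ds / (s (1 - s))`, the kernel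
splits at `s = t` into `t⁻¹ / (1 - s)` and `(1 - t)⁻¹ / s`, and the two halves of the integral
become `∫ e^{±u/2} cos (ω u) du`. These have the primitives
`e^{σu} (σ cos (ω u) + ω sin (ω u)) / (σ² + ω²)` with `σ = ±1/2`, so `σ² + ω² = λ`.
The condition `tan (ω a) = 1 / (2ω)`, `a = log ((1 - ε) / ε)`, says exactly that these primitives
vanish at the endpoints `u = ∓a`; the values left at `u = logit t` add up to `f t / λ`.
-/

lemma Real.sin_eq_mul_cos_of_tan_eq {x c : ℝ} (h : Real.tan x = c) (hc : c ≠ 0) :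
    Real.sin x = c * Real.cos x := by
  rw [Real.tan_eq_sin_div_cos] at h
  have hcos : Real.cos x ≠ 0 := fun h0 => hc (by rw [← h, h0, div_zero])
  rw [← h, div_mul_cancel₀ _ hcos]

noncomputable def logit (s : ℝ) : ℝ := Real.log (s / (1 - s))

lemma hasDerivAt_logit {s : ℝ} (hs : s ∈ Set.Ioo 0 1) :
    HasDerivAt logit (s * (1 - s))⁻¹ s := by
  obtain ⟨hs0, hs1⟩ := hs
  have h1s : 1 - s ≠ 0 := by linarith
  have hdiv := (hasDerivAt_id s).div ((hasDerivAt_id s).const_sub 1) h1s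
  refine (hdiv.log (div_ne_zero hs0.ne' h1s)).congr_deriv ?_
  simp only [Pi.div_apply, id]
  field_simp
  ring

noncomputable def expCosPrimitive (σ ω u : ℝ) : ℝ :=
  Real.exp (σ * u) * (σ * Real.cos (ω * u) + ω * Real.sin (ω * u)) / (σ ^ 2 + ω ^ 2)

lemma hasDerivAt_expCosPrimitive {σ ω : ℝ} (hσω : σ ^ 2 + ω ^ 2 ≠ 0) (u : ℝ) :
    HasDerivAt (expCosPrimitive σ ω) (Real.exp (σ * u) * Real.cos (ω * u)) u := by
  have hσ := (hasDerivAt_id u).const_mul σ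
  have hω := (hasDerivAt_id u).const_mul ω
  refine ((hσ.exp.mul ((hω.cos.const_mul σ).add (hω.sin.const_mul ω))).div_const
    (σ ^ 2 + ω ^ 2)).congr_deriv ?_
  simp only [id, mul_one, Pi.add_apply]
  field_simp
  ring

lemma integral_exp_mul_cos_logit {σ ω : ℝ} (hσω : σ ^ 2 + ω ^ 2 ≠ 0) {a b : ℝ}
    (ha : a ∈ Set.Ioo 0 1) (hb : b ∈ Set.Ioo 0 1) :
    ∫ s in a..b, Real.exp (σ * logit s) * Real.cos (ω * logit s) * (s * (1 - s))⁻¹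
      = expCosPrimitive σ ω (logit b) - expCosPrimitive σ ω (logit a) := by
  have hsub : Set.uIcc a b ⊆ Set.Ioo 0 1 := Set.ordConnected_Ioo.uIcc_subset ha hb
  have hcont : ContinuousOn (fun s : ℝ => (s * (1 - s))⁻¹) (Set.uIcc a b) := by
    refine ContinuousOn.inv₀ (by fun_prop) fun s hs => ?_
    have := hsub hs
    exact mul_ne_zero this.1.ne' (by linarith [this.2])
  rw [← integral_eq_sub_of_hasDerivAt (fun u _ => hasDerivAt_expCosPrimitive hσω u)
    (by apply Continuous.intervalIntegrable; fun_prop)]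
  exact integral_comp_mul_deriv (g := fun u => Real.exp (σ * u) * Real.cos (ω * u))
    (fun s hs => hasDerivAt_logit (hsub hs)) hcont (by fun_prop)

lemma logit_one_sub (s : ℝ) : logit (1 - s) = -logit s := by
  rw [logit, logit, sub_sub_cancel, ← Real.log_inv, inv_div]

lemma exp_half_mul_logit {s : ℝ} (hs : s ∈ Set.Ioo 0 1) :
    Real.exp (1 / 2 * logit s) = s / Real.sqrt (s * (1 - s)) := by
  obtain ⟨hs0, hs1⟩ := hs
  have h1s : 0 < 1 - s := by linarith
  rw [one_div_mul_eq_div, Real.exp_half, logit, Real.exp_log (div_pos hs0 h1s),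
    Real.sqrt_div' _ h1s.le, Real.sqrt_mul hs0.le, ← div_div, Real.div_sqrt]

lemma exp_neg_half_mul_logit {s : ℝ} (hs : s ∈ Set.Ioo 0 1) :
    Real.exp (-(1 / 2) * logit s) = (1 - s) / Real.sqrt (s * (1 - s)) := by
  have hs' : 1 - s ∈ Set.Ioo 0 1 := ⟨by linarith [hs.2], by linarith [hs.1]⟩
  rw [neg_mul, ← mul_neg, ← logit_one_sub, exp_half_mul_logit hs', sub_sub_cancel, mul_comm]

noncomputable def weightedBridgeKernel (s t : ℝ) : ℝ :=
  (min s t - s * t) / (s * (1 - s) * t * (1 - t))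

noncomputable def cosEigenfunction (ω s : ℝ) : ℝ :=
  Real.cos (ω * logit s) / Real.sqrt (s * (1 - s))

section Kernel

variable {ω s t : ℝ}

lemma weightedBridgeKernel_mul_of_le (hs : s ∈ Set.Ioo 0 1) (ht : t ∈ Set.Ioo 0 1)
    (hst : s ≤ t) :
    weightedBridgeKernel s t * cosEigenfunction ω s
      = t⁻¹ * (Real.exp (1 / 2 * logit s) * Real.cos (ω * logit s) * (s * (1 - s))⁻¹) := by
  have hs1 : 0 < 1 - s := by linarith [hs.2]
  have ht1 : 0 < 1 - t := by linarith [ht.2]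
  rw [weightedBridgeKernel, cosEigenfunction, exp_half_mul_logit hs, min_eq_left hst]
  field_simp [hs.1.ne', ht.1.ne']

lemma weightedBridgeKernel_mul_of_ge (hs : s ∈ Set.Ioo 0 1) (ht : t ∈ Set.Ioo 0 1)
    (hts : t ≤ s) :
    weightedBridgeKernel s t * cosEigenfunction ω s
      = (1 - t)⁻¹ * (Real.exp (-(1 / 2) * logit s) * Real.cos (ω * logit s) * (s * (1 - s))⁻¹) := by
  have hs1 : 0 < 1 - s := by linarith [hs.2]
  have ht1 : 0 < 1 - t := by linarith [ht.2]
  rw [weightedBridgeKernel, cosEigenfunction, exp_neg_half_mul_logit hs, min_eq_right hts]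
  field_simp [hs.1.ne', ht.1.ne']

lemma continuousOn_weightedBridgeKernel_mul (ht : t ∈ Set.Ioo 0 1) :
    ContinuousOn (fun s => weightedBridgeKernel s t * cosEigenfunction ω s) (Set.Ioo 0 1) := by
  obtain ⟨ht0, ht1⟩ := ht
  have h1t : 0 < 1 - t := by linarith
  unfold weightedBridgeKernel cosEigenfunction logit
  fun_prop (disch := rintro s ⟨hs0, hs1⟩; have : 0 < 1 - s := (by linarith); positivity)

lemma integral_weightedBridgeKernel_mul {a b : ℝ} (ha : a ∈ Set.Ioo 0 1)
    (hb : b ∈ Set.Ioo 0 1) (hat : a ≤ t) (htb : t ≤ b) :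
    ∫ s in a..b, weightedBridgeKernel s t * cosEigenfunction ω s
      = t⁻¹ * (expCosPrimitive (1 / 2) ω (logit t) - expCosPrimitive (1 / 2) ω (logit a))
        + (1 - t)⁻¹ * (expCosPrimitive (-(1 / 2)) ω (logit b)
          - expCosPrimitive (-(1 / 2)) ω (logit t)) := by
  have ht : t ∈ Set.Ioo 0 1 := ⟨ha.1.trans_le hat, htb.trans_lt hb.2⟩
  have hsub : ∀ {c d}, c ∈ Set.Ioo (0 : ℝ) 1 → d ∈ Set.Ioo (0 : ℝ) 1 →
      Set.uIcc c d ⊆ Set.Ioo 0 1 := fun hc hd => Set.ordConnected_Ioo.uIcc_subset hc hd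
  have hint : ∀ {c d}, c ∈ Set.Ioo (0 : ℝ) 1 → d ∈ Set.Ioo (0 : ℝ) 1 →
      IntervalIntegrable (fun s => weightedBridgeKernel s t * cosEigenfunction ω s) volume c d :=
    fun hc hd => ((continuousOn_weightedBridgeKernel_mul ht).mono (hsub hc hd)).intervalIntegrable
  rw [← integral_add_adjacent_intervals (hint ha ht) (hint ht hb),
    ← integral_exp_mul_cos_logit (by positivity) ha ht,
    ← integral_exp_mul_cos_logit (by positivity) ht hb,
    ← intervalIntegral.integral_const_mul, ← intervalIntegral.integral_const_mul]
  congr 1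
  · refine integral_congr fun s hs => ?_
    rw [Set.uIcc_of_le hat] at hs
    exact weightedBridgeKernel_mul_of_le (hsub ha ht (Set.Icc_subset_uIcc hs)) ht hs.2
  · refine integral_congr fun s hs => ?_
    rw [Set.uIcc_of_le htb] at hs
    exact weightedBridgeKernel_mul_of_ge (hsub ht hb (Set.Icc_subset_uIcc hs)) ht hs.1

end Kernel

lemma expCosPrimitive_eq_zero {σ ω u : ℝ}
    (h : σ * Real.cos (ω * u) + ω * Real.sin (ω * u) = 0) : expCosPrimitive σ ω u = 0 := by
  rw [expCosPrimitive, h, mul_zero, zero_div]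

lemma cosEigenfunction_eq_expCosPrimitive {ω t : ℝ} (ht : t ∈ Set.Ioo 0 1) :
    cosEigenfunction ω t = (ω ^ 2 + 1 / 4) * (t⁻¹ * expCosPrimitive (1 / 2) ω (logit t)
      - (1 - t)⁻¹ * expCosPrimitive (-(1 / 2)) ω (logit t)) := by
  have h1t : 0 < 1 - t := by linarith [ht.2]
  rw [cosEigenfunction, expCosPrimitive, expCosPrimitive, exp_half_mul_logit ht,
    exp_neg_half_mul_logit ht]
  field_simp [ht.1.ne']
  ring

theorem eigenfunction_cosine_type_general
    (ε ω : ℝ) (hε : 0 < ε) (hω : 0 < ω)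
    (hcond : Real.tan (ω * Real.log ((1 - ε) / ε)) = 1 / (2 * ω)) :
    ∀ t ∈ Set.Icc ε (1 - ε),
      Real.cos (ω * Real.log (t / (1 - t))) / Real.sqrt (t * (1 - t))
        = (ω ^ 2 + 1 / 4) *
            ∫ s in ε..(1 - ε),
              ((min s t - s * t) / (s * (1 - s) * t * (1 - t))) *
                (Real.cos (ω * Real.log (s / (1 - s))) / Real.sqrt (s * (1 - s))) := by
  intro t ⟨hεt, ht1ε⟩
  have hε01 : ε ∈ Set.Ioo 0 1 := ⟨hε, by linarith⟩
  have h1ε01 : 1 - ε ∈ Set.Ioo 0 1 := ⟨by linarith, by linarith⟩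
  have ht01 : t ∈ Set.Ioo 0 1 := ⟨by linarith, by linarith⟩
  have hboundary : ω * Real.sin (ω * logit (1 - ε)) = 1 / 2 * Real.cos (ω * logit (1 - ε)) := by
    rw [logit, sub_sub_cancel, Real.sin_eq_mul_cos_of_tan_eq hcond (by positivity)]
    field_simp
  have hleft : expCosPrimitive (1 / 2) ω (logit ε) = 0 := by
    refine expCosPrimitive_eq_zero ?_
    rw [← sub_sub_cancel 1 ε, logit_one_sub, mul_neg, Real.cos_neg, Real.sin_neg]
    linarith
  have hright : expCosPrimitive (-(1 / 2)) ω (logit (1 - ε)) = 0 :=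
    expCosPrimitive_eq_zero (by linarith)
  show cosEigenfunction ω t
    = (ω ^ 2 + 1 / 4) * ∫ s in ε..(1 - ε), weightedBridgeKernel s t * cosEigenfunction ω s
  rw [integral_weightedBridgeKernel_mul hε01 h1ε01 hεt ht1ε, hleft, hright,
    cosEigenfunction_eq_expCosPrimitive ht01]
  ring

/-- Let `0 < ε < 1/2` and let `ω > 0` satisfy
`tan(ω ln((1−ε)/ε)) = 1/(2ω)`. With `λ = ω² + 1/4` and
`f(t) = (t(1−t))^{−1/2} cos(ω ln(t/(1−t)))`, the function `f` satisfies the integral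
eigenvalue equation
`f(t) = λ ∫_ε^{1−ε} ((min(s,t) − st)/(s(1−s)t(1−t))) f(s) ds` on `[ε, 1−ε]`. -/
theorem eigenfunction_cosine_type
    (ε ω : ℝ) (hε : 0 < ε) (hε' : ε < 1 / 2) (hω : 0 < ω)
    (hcond : Real.tan (ω * Real.log ((1 - ε) / ε)) = 1 / (2 * ω)) :
    ∀ t ∈ Set.Icc ε (1 - ε),
      Real.cos (ω * Real.log (t / (1 - t))) / Real.sqrt (t * (1 - t))
        = (ω ^ 2 + 1 / 4) *
            ∫ s in ε..(1 - ε),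
              ((min s t - s * t) / (s * (1 - s) * t * (1 - t))) *
                (Real.cos (ω * Real.log (s / (1 - s))) / Real.sqrt (s * (1 - s))) :=
  eigenfunction_cosine_type_general ε ω hε hω hcond
end

section
/- Fix 0 < t < s < 1. For each n ≥ 1 let i_n, j_n be integers with 1 ≤ i_n ≤ j_n ≤ n+1 such that i_n/(n+1) → t and j_n/(n+1) → s as n → ∞. For 1 ≤ k ≤ n set ψ_k^{(n)} = (n+1)²/(k(n+1−k)), and define κ_n = (1/(n+1)²) Σ_{k=1}^n ψ_k^{(n)} ( max(0, k + i_n − j_n) + max(0, k − i_n + j_n − (n+1)) − k²/(n+1) ). Then κ_n → 2( (s−t) ln(s−t) + (1−(s−t)) ln(1−(s−t)) ) + 1 as n → ∞. -/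
/-!
Write `m = n + 1` and `d = j_n - i_n`. The partial fractions
`1 / (k (m - k)) = (1 / m) (1 / k + 1 / (m - k))` turn `κ_n` into an exact combination of harmonic
numbers, symmetric under `d ↦ m - d`:
`κ_n = T(d) + T(m - d) + n / m` with `T(a) = (a / m) ((H_a - H_n) + (H_{a-1} - H_n))`.
As `H_a - log a` and `H_n - log m` both tend to Euler's constant, `H_a - H_n → log c` whenever
`a / m → c > 0`, so `T(a) → 2 c log c`.
-/

open Filter Finset

theorem sum_Ioc_inv_eq_harmonic_sub {a b : ℕ} (h : a ≤ b) :
    ∑ k ∈ Ioc a b, (k : ℝ)⁻¹ = harmonic b - harmonic a := by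
  induction b, h using Nat.le_induction with
  | base => simp
  | succ b hab ih =>
    rw [sum_Ioc_succ_top hab, ih, harmonic_succ]
    push_cast
    ring

theorem Finset.sum_Ioc_reflect {M : Type*} [AddCommMonoid M] (f : ℕ → M) (d n : ℕ) :
    ∑ k ∈ Ioc d n, f (n + 1 - k) = ∑ k ∈ Ioc 0 (n - d), f k := by
  refine sum_nbij' (fun k => n + 1 - k) (fun l => n + 1 - l) ?_ ?_ ?_ ?_ ?_ <;>
    intro k hk <;> simp only [mem_Ioc] at hk ⊢ <;> omega

theorem sum_Ioc_inv_reflect_eq_harmonic (d n : ℕ) :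
    ∑ k ∈ Ioc d n, ((n : ℝ) + 1 - k)⁻¹ = harmonic (n - d) := by
  have h := sum_Ioc_inv_eq_harmonic_sub (Nat.zero_le (n - d))
  rw [harmonic_zero, Rat.cast_zero, sub_zero, ← sum_Ioc_reflect] at h
  rw [← h]
  refine sum_congr rfl fun k hk => ?_
  rw [Nat.cast_sub (by rw [mem_Ioc] at hk; omega), Nat.cast_add_one]

theorem tendsto_harmonic_sub_harmonic {a : ℕ → ℕ} {c : ℝ} (hc : 0 < c)
    (ha : Tendsto (fun n => (a n : ℝ) / (n + 1)) atTop (nhds c)) :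
    Tendsto (fun n => (harmonic (a n) : ℝ) - harmonic n) atTop (nhds (Real.log c)) := by
  have ha_top : Tendsto a atTop atTop := by
    refine tendsto_natCast_atTop_iff.mp ((ha.pos_mul_atTop hc
      (tendsto_atTop_add_const_right _ 1 tendsto_natCast_atTop_atTop)).congr fun n => ?_)
    field_simp
  have hlim := ((Real.tendsto_harmonic_sub_log.comp ha_top).sub
    Real.tendsto_harmonic_sub_log_add_one).add (ha.log hc.ne')
  rw [sub_self, zero_add] at hlim
  refine hlim.congr' ?_
  filter_upwards [ha_top.eventually_ne_atTop 0] with n hn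
  rw [Function.comp_apply, Real.log_div (by exact_mod_cast hn) (by positivity)]
  ring

namespace ADKernel

theorem sum_max_sub_div (n : ℕ) {d : ℕ} (hd : d ≤ n) :
    ∑ k ∈ Icc 1 n, max 0 ((k : ℝ) - d) / (k * ((n + 1) - k)) =
      d / (n + 1) * ((harmonic d : ℝ) - harmonic n) + (n + 1 - d) / (n + 1) * harmonic (n - d) := by
  have hsplit : ∀ k ∈ Icc 1 n, max 0 ((k : ℝ) - d) / (k * ((n + 1) - k)) =
      if d < k then -(d / (n + 1)) * (k : ℝ)⁻¹ + (n + 1 - d) / (n + 1) * ((n : ℝ) + 1 - k)⁻¹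
      else 0 := by
    intro k hk
    rw [mem_Icc] at hk
    have hk0 : (k : ℝ) ≠ 0 := Nat.cast_ne_zero.mpr (by omega)
    have hkm : (n : ℝ) + 1 - k ≠ 0 := by
      rw [sub_ne_zero]; exact_mod_cast (by omega : n + 1 ≠ k)
    split_ifs with hdk
    · rw [max_eq_right (sub_nonneg.mpr (by exact_mod_cast hdk.le))]
      field_simp
      ring
    · rw [max_eq_left (sub_nonpos.mpr (by exact_mod_cast not_lt.mp hdk)), zero_div]
  have hfilter : (Icc 1 n).filter (d < ·) = Ioc d n := by
    ext k; simp only [mem_filter, mem_Icc, mem_Ioc]; omega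
  rw [sum_congr rfl hsplit, ← sum_filter, hfilter, sum_add_distrib, ← mul_sum, ← mul_sum,
    sum_Ioc_inv_eq_harmonic_sub hd, sum_Ioc_inv_reflect_eq_harmonic]
  ring

theorem sum_sq_div (n : ℕ) :
    ∑ k ∈ Icc 1 n, (k : ℝ) ^ 2 / (n + 1) / (k * ((n + 1) - k)) = harmonic n - n / (n + 1 : ℝ) := by
  have hsplit : ∀ k ∈ Icc 1 n, (k : ℝ) ^ 2 / (n + 1) / (k * ((n + 1) - k)) =
      ((n : ℝ) + 1 - k)⁻¹ - (n + 1 : ℝ)⁻¹ := by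
    intro k hk
    rw [mem_Icc] at hk
    have hk0 : (k : ℝ) ≠ 0 := Nat.cast_ne_zero.mpr (by omega)
    have hkm : (n : ℝ) + 1 - k ≠ 0 := by
      rw [sub_ne_zero]; exact_mod_cast (by omega : n + 1 ≠ k)
    field_simp
    ring
  have hIcc : Icc 1 n = Ioc 0 n := Icc_add_one_left_eq_Ioc 0 n
  rw [sum_congr rfl hsplit, sum_sub_distrib, hIcc, sum_Ioc_inv_reflect_eq_harmonic, sum_const,
    Nat.card_Ioc, nsmul_eq_mul, Nat.sub_zero, div_eq_mul_inv]

/-- `κ_n` with the weights `ψ_k` cancelled against the prefactor `1 / (n + 1)²`, as a function of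
the gap `d = j_n - i_n`. -/
noncomputable def circKernel (n d : ℕ) : ℝ :=
  ∑ k ∈ Icc 1 n, (max 0 ((k : ℝ) - d) + max 0 ((k : ℝ) + d - (n + 1)) - (k : ℝ) ^ 2 / (n + 1)) /
    (k * ((n + 1) - k))

noncomputable def harmonicTerm (n a : ℕ) : ℝ :=
  a / (n + 1) * (((harmonic a : ℝ) - harmonic n) + ((harmonic (a - 1) : ℝ) - harmonic n))

theorem circKernel_eq {n d : ℕ} (hd1 : 1 ≤ d) (hdn : d ≤ n) :
    circKernel n d = harmonicTerm n d + harmonicTerm n (n + 1 - d) + n / (n + 1) := by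
  have he : ((n + 1 - d : ℕ) : ℝ) = n + 1 - d := by
    rw [Nat.cast_sub (by omega)]; push_cast; ring
  have hsplit : ∀ k ∈ Icc 1 n,
      (max 0 ((k : ℝ) - d) + max 0 ((k : ℝ) + d - (n + 1)) - (k : ℝ) ^ 2 / (n + 1)) /
        (k * ((n + 1) - k)) =
      max 0 ((k : ℝ) - d) / (k * ((n + 1) - k)) +
        max 0 ((k : ℝ) - (n + 1 - d : ℕ)) / (k * ((n + 1) - k)) -
        (k : ℝ) ^ 2 / (n + 1) / (k * ((n + 1) - k)) := by
    intro k _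
    rw [he, ← add_div, ← sub_div]
    ring_nf
  rw [circKernel, sum_congr rfl hsplit, sum_sub_distrib, sum_add_distrib, sum_max_sub_div n hdn,
    sum_max_sub_div n (by omega : n + 1 - d ≤ n), sum_sq_div, harmonicTerm, harmonicTerm,
    show n - (n + 1 - d) = d - 1 by omega, show n + 1 - d - 1 = n - d by omega, he]
  field_simp
  ring

theorem tendsto_harmonicTerm {a : ℕ → ℕ} {c : ℝ} (hc : 0 < c)
    (ha : Tendsto (fun n => (a n : ℝ) / (n + 1)) atTop (nhds c)) :
    Tendsto (fun n => harmonicTerm n (a n)) atTop (nhds (2 * (c * Real.log c))) := by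
  have ha' : Tendsto (fun n => ((a n - 1 : ℕ) : ℝ) / (n + 1)) atTop (nhds c) := by
    have h := ha.sub tendsto_one_div_add_atTop_nhds_zero_nat
    rw [sub_zero] at h
    refine h.congr' ?_
    filter_upwards [ha.eventually (eventually_gt_nhds hc)] with n hn
    have : 1 ≤ a n := Nat.cast_pos.mp ((div_pos_iff_of_pos_right (by positivity)).mp hn)
    rw [Nat.cast_sub this, sub_div, Nat.cast_one]
  have h :=
    ha.mul ((tendsto_harmonic_sub_harmonic hc ha).add (tendsto_harmonic_sub_harmonic hc ha'))
  rw [show c * (Real.log c + Real.log c) = 2 * (c * Real.log c) by ring] at h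
  exact h

theorem tendsto_circKernel {d : ℕ → ℕ} {δ : ℝ} (hδ0 : 0 < δ) (hδ1 : δ < 1)
    (hd : Tendsto (fun n => (d n : ℝ) / (n + 1)) atTop (nhds δ)) :
    Tendsto (fun n => circKernel n (d n)) atTop
      (nhds (2 * (δ * Real.log δ + (1 - δ) * Real.log (1 - δ)) + 1)) := by
  have hm : ∀ n : ℕ, (0 : ℝ) < n + 1 := fun n => by positivity
  have he : Tendsto (fun n => ((n + 1 - d n : ℕ) : ℝ) / (n + 1)) atTop (nhds (1 - δ)) := by
    refine (tendsto_const_nhds.sub hd).congr' ?_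
    filter_upwards [hd.eventually (eventually_lt_nhds hδ1)] with n hn
    have : d n ≤ n + 1 := by exact_mod_cast ((div_lt_one (hm n)).mp hn).le
    rw [Nat.cast_sub this, one_sub_div (hm n).ne']
    push_cast
    ring
  have h := ((tendsto_harmonicTerm hδ0 hd).add (tendsto_harmonicTerm (by linarith) he)).add
    (tendsto_natCast_div_add_atTop (1 : ℝ))
  rw [← mul_add] at h
  refine h.congr' ?_
  filter_upwards [hd.eventually (eventually_gt_nhds hδ0), hd.eventually (eventually_lt_nhds hδ1)]
    with n hpos hlt
  have h1 : 1 ≤ d n := Nat.cast_pos.mp ((div_pos_iff_of_pos_right (hm n)).mp hpos)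
  have h2 : d n < n + 1 := by exact_mod_cast (div_lt_one (hm n)).mp hlt
  exact (circKernel_eq h1 (by omega)).symm

end ADKernel

theorem kernel_limit_AD_circularized_general
    (t s : ℝ) (ht : 0 < t) (hts : t < s) (hs : s < 1)
    (i j : ℕ → ℕ)
    (hij : ∀ n, 1 ≤ n → i n ≤ j n)
    (hit : Tendsto (fun n : ℕ => (i n : ℝ) / ((n : ℝ) + 1)) atTop (nhds t))
    (hjs : Tendsto (fun n : ℕ => (j n : ℝ) / ((n : ℝ) + 1)) atTop (nhds s)) :
    Tendsto (fun n : ℕ =>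
        (1 / ((n : ℝ) + 1) ^ 2) *
          ∑ k ∈ Finset.Icc 1 n,
            (((n : ℝ) + 1) ^ 2 / ((k : ℝ) * (((n : ℝ) + 1) - (k : ℝ)))) *
              (max 0 ((k : ℝ) + (i n : ℝ) - (j n : ℝ))
                + max 0 ((k : ℝ) - (i n : ℝ) + (j n : ℝ) - ((n : ℝ) + 1))
                - (k : ℝ) ^ 2 / ((n : ℝ) + 1)))
      atTop
      (nhds (2 * ((s - t) * Real.log (s - t)
          + (1 - (s - t)) * Real.log (1 - (s - t))) + 1)) := by
  have hgap : ∀ᶠ n in atTop, ((j n - i n : ℕ) : ℝ) = j n - i n := by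
    filter_upwards [eventually_ge_atTop 1] with n hn
    exact Nat.cast_sub (hij n hn)
  have hd : Tendsto (fun n => ((j n - i n : ℕ) : ℝ) / (n + 1)) atTop (nhds (s - t)) := by
    refine (hjs.sub hit).congr' ?_
    filter_upwards [hgap] with n hn
    rw [hn, sub_div]
  refine (ADKernel.tendsto_circKernel (by linarith) (by linarith) hd).congr' ?_
  filter_upwards [hgap] with n hn
  rw [ADKernel.circKernel, mul_sum, hn]
  refine sum_congr rfl fun k _ => ?_
  rw [show (k : ℝ) - (j n - i n) = k + i n - j n by ring,
    show (k : ℝ) + (j n - i n) - (n + 1) = k - i n + j n - (n + 1) by ring]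
  field_simp

/-- Fix `0 < t < s < 1` and sequences `1 ≤ i_n ≤ j_n ≤ n+1` (for
`n ≥ 1`) with `i_n/(n+1) → t`, `j_n/(n+1) → s`. With weights
`ψ_k = (n+1)²/(k(n+1−k))` (the circularized Anderson–Darling weights
`ψ_k = 1/(μ_k(1−μ_k))`, `μ_k = k/(n+1)`), the kernel-matrix entries
`κ_n = (1/(n+1)²) Σ_{k=1}^n ψ_k (max(0, k+i_n−j_n) + max(0, k−i_n+j_n−(n+1)) − k²/(n+1))`
converge to `2((s−t) ln(s−t) + (1−(s−t)) ln(1−(s−t))) + 1`. -/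
theorem kernel_limit_AD_circularized
    (t s : ℝ) (ht : 0 < t) (hts : t < s) (hs : s < 1)
    (i j : ℕ → ℕ)
    (hi1 : ∀ n, 1 ≤ n → 1 ≤ i n) (hij : ∀ n, 1 ≤ n → i n ≤ j n)
    (hjn : ∀ n, 1 ≤ n → j n ≤ n + 1)
    (hit : Tendsto (fun n : ℕ => (i n : ℝ) / ((n : ℝ) + 1)) atTop (nhds t))
    (hjs : Tendsto (fun n : ℕ => (j n : ℝ) / ((n : ℝ) + 1)) atTop (nhds s)) :
    Tendsto (fun n : ℕ =>
        (1 / ((n : ℝ) + 1) ^ 2) *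
          ∑ k ∈ Finset.Icc 1 n,
            (((n : ℝ) + 1) ^ 2 / ((k : ℝ) * (((n : ℝ) + 1) - (k : ℝ)))) *
              (max 0 ((k : ℝ) + (i n : ℝ) - (j n : ℝ))
                + max 0 ((k : ℝ) - (i n : ℝ) + (j n : ℝ) - ((n : ℝ) + 1))
                - (k : ℝ) ^ 2 / ((n : ℝ) + 1)))
      atTop
      (nhds (2 * ((s - t) * Real.log (s - t)
          + (1 - (s - t)) * Real.log (1 - (s - t))) + 1)) :=
  kernel_limit_AD_circularized_general t s ht hts hs i j hij hit hjs
end
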